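/- arXiv:2001.04569 — 5 statements merged into one kernel-verified Lean document; each statement's English description precedes it below -/
import Mathlib

section
/- Let S ⊆ ℝ be a set that is locally finite (every bounded interval contains only finitely many points of S), has at least two elements, and is stable under the reflection x ↦ 2a − x for every a ∈ S. If ℓ ∈ ℝ satisfies ℓ·s ∈ S for every s ∈ S, then ℓ is an integer. -/
/-!
The composite of the reflections in `b` and then `a` is the translation by `2 (a - b)`, so the
additive group `L` generated by the numbers `2 (a - b)` with `a, b ∈ S` acts on `S` by
translations. Hence `x + L ⊆ S` for any `x ∈ S`, and local finiteness of `S` makes `L` a discrete,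
hence cyclic, subgroup `ℤ g` of `ℝ`, with `g ≠ 0` because `S` has two points. Scaling by `ℓ` maps
the generators of `L` to generators, so `ℓ g ∈ ℤ g`, i.e. `ℓ ∈ ℤ`.
-/

open Set Filter Topology

theorem exists_int_eq_of_mul_mem_of_isolated_zero {K : Type*} [Field K] [LinearOrder K]
    [IsStrictOrderedRing K] [Archimedean K] {H : AddSubgroup K} {a ℓ : K} (ha : 0 < a)
    (hdisj : Disjoint (H : Set K) (Ioo 0 a)) (hbot : H ≠ ⊥) (hmul : ∀ t ∈ H, ℓ * t ∈ H) :
    ∃ n : ℤ, ℓ = n := by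
  obtain ⟨g, rfl⟩ := AddSubgroup.cyclic_of_isolated_zero ha hdisj
  have hg : g ≠ 0 := by
    rintro rfl
    exact hbot AddSubgroup.closure_singleton_zero
  obtain ⟨n, hn⟩ := AddSubgroup.mem_closure_singleton.1
    (hmul g (AddSubgroup.subset_closure rfl))
  exact ⟨n, mul_right_cancel₀ hg (by rw [← hn, zsmul_eq_mul])⟩

theorem Real.exists_disjoint_Ioo_zero_of_finite {A : Set ℝ} (hfin : (A ∩ Icc 0 1).Finite) :
    ∃ a > 0, Disjoint A (Ioo 0 a) := by
  set F := A ∩ Ioc 0 1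
  have hF : Fᶜ ∈ 𝓝[>] (0 : ℝ) :=
    nhdsWithin_le_nhds <| (hfin.subset (inter_subset_inter_right A Ioc_subset_Icc_self)).isClosed
      |>.isOpen_compl.mem_nhds fun h => lt_irrefl 0 h.2.1
  obtain ⟨u, hu, hsub⟩ := mem_nhdsGT_iff_exists_Ioo_subset.1 hF
  refine ⟨min u 1, lt_min hu one_pos, disjoint_left.2 fun x hxA hx => ?_⟩
  have hxu : x < u := hx.2.trans_le (min_le_left u 1)
  have hx1 : x < 1 := hx.2.trans_le (min_le_right u 1)
  exact hsub ⟨hx.1, hxu⟩ ⟨hxA, hx.1, hx1.le⟩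

def translationLattice (S : Set ℝ) : AddSubgroup ℝ :=
  AddSubgroup.closure (image2 (fun a b => 2 * (a - b)) S S)

section

variable {S : Set ℝ}

theorem two_mul_sub_mem_translationLattice {a b : ℝ} (ha : a ∈ S) (hb : b ∈ S) :
    2 * (a - b) ∈ translationLattice S :=
  AddSubgroup.subset_closure (mem_image2_of_mem ha hb)

theorem add_mem_of_mem_translationLattice (hrefl : ∀ a ∈ S, ∀ x ∈ S, 2 * a - x ∈ S) {t : ℝ}
    (ht : t ∈ translationLattice S) : ∀ u ∈ S, u + t ∈ S := by
  induction ht using AddSubgroup.closure_induction with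
  | mem t ht =>
    obtain ⟨a, ha, b, hb, rfl⟩ := ht
    intro u hu
    rw [show u + 2 * (a - b) = 2 * a - (2 * b - u) by ring]
    exact hrefl a ha _ (hrefl b hb u hu)
  | zero => exact fun u hu => by rwa [add_zero]
  | add t₁ t₂ _ _ h₁ h₂ =>
    intro u hu
    rw [← add_assoc]
    exact h₂ _ (h₁ u hu)
  | neg t _ h =>
    intro u hu
    rw [show u + -t = 2 * u - (u + t) by ring]
    exact hrefl u hu _ (h u hu)

theorem mul_mem_translationLattice {ℓ : ℝ} (hscale : ∀ s ∈ S, ℓ * s ∈ S) {t : ℝ}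
    (ht : t ∈ translationLattice S) : ℓ * t ∈ translationLattice S := by
  induction ht using AddSubgroup.closure_induction with
  | mem t ht =>
    obtain ⟨a, ha, b, hb, rfl⟩ := ht
    rw [show ℓ * (2 * (a - b)) = 2 * (ℓ * a - ℓ * b) by ring]
    exact two_mul_sub_mem_translationLattice (hscale a ha) (hscale b hb)
  | zero => simp
  | add t₁ t₂ _ _ h₁ h₂ => simpa only [mul_add] using add_mem h₁ h₂
  | neg t _ h => simpa only [mul_neg] using neg_mem h

theorem finite_translationLattice_inter_Icc (hloc : ∀ a b : ℝ, (S ∩ Icc a b).Finite)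
    (hrefl : ∀ a ∈ S, ∀ x ∈ S, 2 * a - x ∈ S) {x : ℝ} (hx : x ∈ S) (a b : ℝ) :
    ((translationLattice S : Set ℝ) ∩ Icc a b).Finite := by
  refine ((hloc (x + a) (x + b)).image (· - x)).subset ?_
  rintro t ⟨ht, hat, htb⟩
  exact ⟨x + t, ⟨add_mem_of_mem_translationLattice hrefl ht x hx, by linarith, by linarith⟩,
    by ring⟩

end

/-- Let `S ⊆ ℝ` be a set that is locally finite (every bounded closed interval contains
only finitely many points of `S`), has at least two elements, and is stable under the
reflection `x ↦ 2a − x` for every `a ∈ S`.  If `ℓ ∈ ℝ` satisfies `ℓ·s ∈ S` for every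
`s ∈ S`, then `ℓ` is an integer. -/
theorem reflection_stable_locally_finite_scaling_integer
    (S : Set ℝ)
    (hloc : ∀ a b : ℝ, (S ∩ Set.Icc a b).Finite)
    (htwo : ∃ x ∈ S, ∃ y ∈ S, x ≠ y)
    (hrefl : ∀ a ∈ S, ∀ x ∈ S, 2 * a - x ∈ S)
    (ℓ : ℝ) (hscale : ∀ s ∈ S, ℓ * s ∈ S) :
    ∃ n : ℤ, ℓ = (n : ℝ) := by
  obtain ⟨x, hx, y, hy, hxy⟩ := htwo
  obtain ⟨a, ha, hdisj⟩ := Real.exists_disjoint_Ioo_zero_of_finite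
    (finite_translationLattice_inter_Icc hloc hrefl hx 0 1)
  have hbot : translationLattice S ≠ ⊥ :=
    (AddSubgroup.ne_bot_iff_exists_ne_zero).2 ⟨⟨_, two_mul_sub_mem_translationLattice hy hx⟩,
      by simpa [sub_eq_zero] using hxy.symm⟩
  exact exists_int_eq_of_mul_mem_of_isolated_zero ha hdisj hbot
    fun t ht => mul_mem_translationLattice hscale ht
end

section
/- Let A be a (not necessarily commutative) ring, J ⊆ A a two-sided ideal, N ≥ 0 a natural number, and I_1, …, I_N two-sided ideals of A such that (i) I_k · I_l ⊆ Σ_{m ≥ max(k,l)} I_m whenever k ≠ l, and (ii) I_k · I_k ⊆ I_k·J + Σ_{m > k} I_m for every k. Then every product of 2^N elements of the ideal I_1 + ⋯ + I_N lies in J. In particular there exists a positive integer M such that any product of M elements of I_1 + ⋯ + I_N lies in J. -/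
open TwoSidedIdeal

/-- The product `I·J` of two two-sided ideals: the two-sided ideal generated by
all products `a * b` with `a ∈ I` and `b ∈ J` (since `I` and `J` are two-sided
ideals, this coincides with the set of finite sums of such products). -/
def TwoSidedIdeal.prod {A : Type*} [Ring A] (I J : TwoSidedIdeal A) : TwoSidedIdeal A :=
  TwoSidedIdeal.span {x | ∃ a ∈ I, ∃ b ∈ J, x = a * b}

/-!
Put `T k = Σ_{m ≥ k} I_m` and `K k = J + T k`, so that `K k = I_k + K (k + 1)` for `k < N`.
As `K (k + 1)` is a two-sided ideal, the only term of a product of two elements of `K k` that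
can escape it is the `I_k · I_k` term, which (ii) puts back into it: `K k · K k ⊆ K (k + 1)`.
Cutting a product of `2^d` factors in half `d` times, products of `2^d` elements of `K 0` lie
in `K d`, and `K N = J`.
-/

theorem prod_mem_of_length_eq_two_pow {M : Type*} [Monoid M] (K : ℕ → Set M)
    (hK : ∀ k, ∀ x ∈ K k, ∀ y ∈ K k, x * y ∈ K (k + 1)) (d : ℕ) :
    ∀ (k : ℕ) (L : List M), L.length = 2 ^ d → (∀ a ∈ L, a ∈ K k) → L.prod ∈ K (k + d) := by
  induction d with
  | zero =>
    intro k L hL hmem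
    obtain ⟨a, rfl⟩ := List.length_eq_one_iff.mp hL
    simpa using hmem a (List.mem_singleton_self a)
  | succ d ih =>
    intro k L hL hmem
    have hhalf : ∀ L' : List M, L'.length = 2 ^ d → (∀ a ∈ L', a ∈ L) → L'.prod ∈ K (k + d) :=
      fun L' hL' hsub => ih k L' hL' fun a ha => hmem a (hsub a ha)
    rw [← List.take_append_drop (2 ^ d) L, List.prod_append, ← add_assoc]
    refine hK _ _ (hhalf _ ?_ fun _ => List.mem_of_mem_take) _
      (hhalf _ ?_ fun _ => List.mem_of_mem_drop)
    all_goals simp only [List.length_take, List.length_drop, hL, pow_succ]; omega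

namespace TwoSidedIdeal

variable {A : Type*} [Ring A]

theorem prod_le_right (I J : TwoSidedIdeal A) : I.prod J ≤ J :=
  span_le.mpr <| by rintro _ ⟨a, -, b, hb, rfl⟩; exact J.mul_mem_left a b hb

theorem mul_mem_of_mem_sup {S U K : TwoSidedIdeal A} (hU : U ≤ K)
    (hS : ∀ a ∈ S, ∀ b ∈ S, a * b ∈ K) {x y : A} (hx : x ∈ S ⊔ U) (hy : y ∈ S ⊔ U) :
    x * y ∈ K := by
  obtain ⟨a, ha, u, hu, rfl⟩ := mem_sup.mp hx
  obtain ⟨b, hb, v, hv, rfl⟩ := mem_sup.mp hy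
  have hsplit : (a + u) * (b + v) = a * b + (a * v + u * (b + v)) := by noncomm_ring
  rw [hsplit]
  exact K.add_mem (hS a ha b hb)
    (K.add_mem (hU (U.mul_mem_left a v hv)) (hU (U.mul_mem_right u _ hu)))

variable {N : ℕ} (I : Fin N → TwoSidedIdeal A)

def tailSup (k : ℕ) : TwoSidedIdeal A := ⨆ (m : Fin N) (_ : k ≤ (m : ℕ)), I m

theorem iSup_le_tailSup_zero : ⨆ m, I m ≤ tailSup I 0 :=
  iSup_mono fun _ => le_iSup_of_le (Nat.zero_le _) le_rfl

theorem tailSup_eq_bot {k : ℕ} (hk : N ≤ k) : tailSup I k = ⊥ :=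
  eq_bot_iff.mpr <| iSup₂_le fun m hm => absurd (hk.trans hm) (not_le.mpr m.isLt)

theorem tailSup_le_sup_succ {k : ℕ} (hk : k < N) :
    tailSup I k ≤ I ⟨k, hk⟩ ⊔ tailSup I (k + 1) := by
  refine iSup₂_le fun m hm => ?_
  rcases hm.eq_or_lt with rfl | hlt
  · exact le_sup_left
  · exact le_sup_of_le_right (le_iSup₂_of_le m hlt le_rfl)

theorem iSup_gt_le_tailSup_succ (k : Fin N) :
    ⨆ m ∈ {m : Fin N | k < m}, I m ≤ tailSup I (k + 1) :=
  iSup₂_le fun m hm => le_iSup₂_of_le m hm le_rfl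

theorem mul_mem_sup_tailSup_succ (J : TwoSidedIdeal A)
    (h2 : ∀ k : Fin N, ∀ a ∈ I k, ∀ b ∈ I k,
        a * b ∈ (I k).prod J ⊔ ⨆ m ∈ {m : Fin N | k < m}, I m)
    (k : ℕ) {x y : A} (hx : x ∈ J ⊔ tailSup I k) (hy : y ∈ J ⊔ tailSup I k) :
    x * y ∈ J ⊔ tailSup I (k + 1) := by
  by_cases hk : k < N
  · have hle : J ⊔ tailSup I k ≤ I ⟨k, hk⟩ ⊔ (J ⊔ tailSup I (k + 1)) :=
      sup_le (le_sup_of_le_right le_sup_left)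
        ((tailSup_le_sup_succ I hk).trans (sup_le_sup_left le_sup_right _))
    refine mul_mem_of_mem_sup le_rfl (fun a ha b hb => ?_) (hle hx) (hle hy)
    exact sup_le_sup (prod_le_right _ J) (iSup_gt_le_tailSup_succ I ⟨k, hk⟩) (h2 _ a ha b hb)
  · rw [tailSup_eq_bot I (not_lt.mp hk), sup_bot_eq] at hx
    exact mem_sup_left (J.mul_mem_right x y hx)

end TwoSidedIdeal

theorem prod_pow_two_mem_of_ideal_filtration_general
    {A : Type*} [Ring A] (J : TwoSidedIdeal A) (N : ℕ)
    (I : Fin N → TwoSidedIdeal A)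
    (h2 : ∀ k : Fin N, ∀ a ∈ I k, ∀ b ∈ I k,
        a * b ∈ (I k).prod J ⊔ ⨆ m ∈ {m : Fin N | k < m}, I m) :
    (∀ f : Fin (2 ^ N) → A, (∀ j, f j ∈ ⨆ k, I k) → (List.ofFn f).prod ∈ J) ∧
    ∃ M : ℕ, 0 < M ∧
      ∀ L : List A, L.length = M → (∀ a ∈ L, a ∈ ⨆ k, I k) → L.prod ∈ J := by
  have key : ∀ L : List A, L.length = 2 ^ N → (∀ a ∈ L, a ∈ ⨆ k, I k) → L.prod ∈ J := by
    intro L hL hmem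
    have hprod := prod_mem_of_length_eq_two_pow (fun k => ((J ⊔ tailSup I k : TwoSidedIdeal A) : Set A))
      (fun k _ hx _ hy => mul_mem_sup_tailSup_succ I J h2 k hx hy) N 0 L hL
      fun a ha => mem_sup_right (iSup_le_tailSup_zero I (hmem a ha))
    simpa only [zero_add, tailSup_eq_bot I le_rfl, sup_bot_eq, SetLike.mem_coe] using hprod
  refine ⟨fun f hf => key _ List.length_ofFn fun a ha => ?_, 2 ^ N, by positivity, key⟩
  obtain ⟨j, rfl⟩ := (List.mem_ofFn' f a).mp ha
  exact hf j

/-- Let `A` be a (not necessarily commutative) ring, `J ⊆ A` a two-sided ideal,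
`N ≥ 0`, and `I_1, …, I_N` two-sided ideals of `A` such that
(i) `I_k · I_l ⊆ Σ_{m ≥ max(k,l)} I_m` for `k ≠ l`, and
(ii) `I_k · I_k ⊆ I_k·J + Σ_{m > k} I_m` for every `k`.
Then every product of `2^N` elements of `I_1 + ⋯ + I_N` lies in `J`.
In particular there is a positive integer `M` such that any product of `M`
elements of `I_1 + ⋯ + I_N` lies in `J`. -/
theorem prod_pow_two_mem_of_ideal_filtration
    {A : Type*} [Ring A] (J : TwoSidedIdeal A) (N : ℕ)
    (I : Fin N → TwoSidedIdeal A)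
    (h1 : ∀ k l : Fin N, k ≠ l → ∀ a ∈ I k, ∀ b ∈ I l,
        a * b ∈ ⨆ m ∈ {m : Fin N | max k l ≤ m}, I m)
    (h2 : ∀ k : Fin N, ∀ a ∈ I k, ∀ b ∈ I k,
        a * b ∈ (I k).prod J ⊔ ⨆ m ∈ {m : Fin N | k < m}, I m) :
    (∀ f : Fin (2 ^ N) → A, (∀ j, f j ∈ ⨆ k, I k) → (List.ofFn f).prod ∈ J) ∧
    ∃ M : ℕ, 0 < M ∧
      ∀ L : List A, L.length = M → (∀ a ∈ L, a ∈ ⨆ k, I k) → L.prod ∈ J :=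
  prod_pow_two_mem_of_ideal_filtration_general J N I h2
end

section
/- Let R be a commutative integral domain and let x, y be distinct ring automorphisms of R. Let R_x denote the (R,R)-bimodule whose underlying left R-module is R and whose right action is m · r = x(r)·m, and define R_y analogously. Then every homomorphism of (R,R)-bimodules from R_x to R_y is zero. -/
theorem AddMonoidHom.map_eq_mul_map_one {R : Type*} [NonAssocSemiring R] (f : R →+ R)
    (hleft : ∀ r m : R, f (r * m) = r * f m) (r : R) : f r = r * f 1 := by
  simpa using hleft r 1

theorem AddMonoidHom.map_one_eq_zero_of_twisted {R : Type*} [Ring R] [NoZeroDivisors R]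
    {x y : R → R} (hxy : x ≠ y) (f : R →+ R) (hleft : ∀ r m : R, f (r * m) = r * f m)
    (hright : ∀ r : R, f (x r) = y r * f 1) : f 1 = 0 := by
  obtain ⟨r, hr⟩ := Function.ne_iff.mp hxy
  have hmul : x r * f 1 = y r * f 1 := by rw [← hright, ← f.map_eq_mul_map_one hleft]
  exact (mul_eq_mul_right_iff.mp hmul).resolve_left hr

/-- Let `R` be a commutative integral domain and `x, y` distinct ring automorphisms of `R`.
Let `R_x` denote the `(R,R)`-bimodule whose underlying left `R`-module is `R` and whose
right action is `m · r = x r * m`, and define `R_y` analogously.  A homomorphism of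
`(R,R)`-bimodules `R_x → R_y` is an additive map `f : R → R` which is left `R`-linear
(`f (r * m) = r * f m`) and compatible with the right actions
(`f (x r * m) = y r * f m`).  Every such homomorphism is zero. -/
theorem standard_bimodule_hom_eq_zero
    {R : Type*} [CommRing R] [IsDomain R]
    (x y : R ≃+* R) (hxy : x ≠ y)
    (f : R →+ R)
    (hleft : ∀ r m : R, f (r * m) = r * f m)
    (hright : ∀ r m : R, f (x r * m) = y r * f m) :
    f = 0 := by
  have hf1 : f 1 = 0 :=
    f.map_one_eq_zero_of_twisted (x := x) (y := y) (DFunLike.coe_injective.ne hxy) hleft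
      fun r => by simpa using hright r 1
  ext r
  rw [f.map_eq_mul_map_one hleft, hf1, mul_zero, AddMonoidHom.zero_apply]
end

section
/- For every finite sequence (t_1, …, t_m) of elements of S_r there is a canonical isomorphism of graded (R_r, R)-bimodules B_{r,t_1} ⊗_{R_r} ⋯ ⊗_{R_r} B_{r,t_m} ⊗_{R_r} R ≅ R ⊗_R B^r_{t_1} ⊗_R ⋯ ⊗_R B^r_{t_m}, where on both sides R is regarded as an (R_r, R)-bimodule via the inclusion R_r ⊆ R. -/
namespace SB

universe u v

open scoped TensorProduct

/-- A `(A₁, A₂)`-bimodule (over commutative rings, with commuting actions):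
an additive group together with commuting actions of `A₁` (on the left) and
`A₂` (on the right), encoded as ring homomorphisms into the endomorphism ring. -/
structure Bimod (A₁ : Type u) (A₂ : Type u) [CommRing A₁] [CommRing A₂] : Type (max u (v+1)) where
  carrier : Type v
  [acg : AddCommGroup carrier]
  actL : A₁ →+* Module.End ℤ carrier
  actR : A₂ →+* Module.End ℤ carrier
  smul_comm' : ∀ (a : A₁) (b : A₂) (x : carrier), actL a (actR b x) = actR b (actL a x)

attribute [instance] Bimod.acg

variable {A₁ A₂ A₃ : Type u} [CommRing A₁] [CommRing A₂] [CommRing A₃]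

/-- A homomorphism of bimodules. -/
structure BimodHom (M N : Bimod A₁ A₂) where
  toFun : M.carrier →+ N.carrier
  map_actL : ∀ (a : A₁) (x : M.carrier), toFun (M.actL a x) = N.actL a (toFun x)
  map_actR : ∀ (a : A₂) (x : M.carrier), toFun (M.actR a x) = N.actR a (toFun x)

/-- Isomorphism of bimodules. -/
def BimodIso (M N : Bimod A₁ A₂) : Prop :=
  ∃ (f : BimodHom M N) (g : BimodHom N M),
    (∀ x, g.toFun (f.toFun x) = x) ∧ ∀ y, f.toFun (g.toFun y) = y

/-- `M` is a direct summand (retract) of `N`. -/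
def IsRetractOf (M N : Bimod A₁ A₂) : Prop :=
  ∃ (i : BimodHom M N) (p : BimodHom N M), ∀ x, p.toFun (i.toFun x) = x

/-- The bimodule associated to a commutative ring `C` together with two
ring homomorphisms `A₁ → C` (left structure) and `A₂ → C` (right structure). -/
noncomputable def Bimod.ofRing {C : Type v} [CommRing C] (ℓ : A₁ →+* C) (r : A₂ →+* C) :
    Bimod A₁ A₂ where
  carrier := C
  actL := ((Algebra.lmul ℤ C).toRingHom).comp ℓ
  actR := ((Algebra.lmul ℤ C).toRingHom).comp r
  smul_comm' := fun a b x => by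
    show ℓ a * (r b * x) = r b * (ℓ a * x)
    ring

/-- Restriction of scalars on the left along `φ : A₁' → A₁`, and on the right
along `ρ : A₂' → A₂`. -/
def Bimod.restrict {A₁' A₂' : Type u} [CommRing A₁'] [CommRing A₂']
    (M : Bimod A₁ A₂) (φ : A₁' →+* A₁) (ρ : A₂' →+* A₂) : Bimod A₁' A₂' where
  carrier := M.carrier
  actL := M.actL.comp φ
  actR := M.actR.comp ρ
  smul_comm' := fun _ _ _ => M.smul_comm' _ _ _

/-- Twisting the right action along a ring homomorphism `φ : B → A₂`; this
realises the tensor product `M ⊗_{A₂} (A₂)_φ` with a standard bimodule. -/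
def Bimod.twistRight {B : Type u} [CommRing B]
    (M : Bimod A₁ A₂) (φ : B →+* A₂) : Bimod A₁ B :=
  M.restrict (RingHom.id A₁) φ

/-- Finite direct sums of bimodules. -/
noncomputable def Bimod.dsum {n : ℕ} (Ms : Fin n → Bimod A₁ A₂) : Bimod A₁ A₂ where
  carrier := ∀ i, (Ms i).carrier
  actL :=
    { toFun := fun a => LinearMap.pi fun i => ((Ms i).actL a).comp (LinearMap.proj i)
      map_one' := LinearMap.ext fun x => funext fun i => by
        simp [LinearMap.pi_apply, map_one]
      map_mul' := fun a b => LinearMap.ext fun x => funext fun i => by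
        simp [LinearMap.pi_apply, map_mul]
      map_zero' := LinearMap.ext fun x => funext fun i => by
        simp [LinearMap.pi_apply, map_zero]
      map_add' := fun a b => LinearMap.ext fun x => funext fun i => by
        simp only [LinearMap.pi_apply, LinearMap.comp_apply, LinearMap.proj_apply, LinearMap.add_apply, Pi.add_apply]; rw [map_add]; simp [LinearMap.add_apply] }
  actR :=
    { toFun := fun a => LinearMap.pi fun i => ((Ms i).actR a).comp (LinearMap.proj i)
      map_one' := LinearMap.ext fun x => funext fun i => by
        simp [LinearMap.pi_apply, map_one]
      map_mul' := fun a b => LinearMap.ext fun x => funext fun i => by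
        simp [LinearMap.pi_apply, map_mul]
      map_zero' := LinearMap.ext fun x => funext fun i => by
        simp [LinearMap.pi_apply, map_zero]
      map_add' := fun a b => LinearMap.ext fun x => funext fun i => by
        simp only [LinearMap.pi_apply, LinearMap.comp_apply, LinearMap.proj_apply, LinearMap.add_apply, Pi.add_apply]; rw [map_add]; simp [LinearMap.add_apply] }
  smul_comm' := fun a b x => by
    funext i
    simp [LinearMap.pi_apply, (Ms i).smul_comm']

section RingTensor

variable {A : Type u} [CommRing A]

/-- The tensor product `C ⊗_A D` of two commutative rings along ring
homomorphisms `rC : A → C`, `ℓD : A → D`, realised as the quotient of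
`C ⊗_ℤ D` by the ideal identifying `rC a ⊗ 1` with `1 ⊗ ℓD a`. -/
noncomputable def ringTensor {C D : Type v} [CommRing C] [CommRing D]
    (rC : A →+* C) (ℓD : A →+* D) : Type v :=
  (TensorProduct ℤ C D) ⧸ (Ideal.span {x : TensorProduct ℤ C D |
    ∃ a : A, x = (Algebra.TensorProduct.includeLeft (S := ℤ) (rC a)) -
      (Algebra.TensorProduct.includeRight (ℓD a))})

noncomputable instance {C D : Type v} [CommRing C] [CommRing D]
    (rC : A →+* C) (ℓD : A →+* D) : CommRing (ringTensor rC ℓD) :=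
  inferInstanceAs (CommRing ((TensorProduct ℤ C D) ⧸ _))

/-- The ring homomorphism from the left factor into `ringTensor`. -/
noncomputable def ringTensor.inl {C D : Type v} [CommRing C] [CommRing D]
    (rC : A →+* C) (ℓD : A →+* D) : C →+* ringTensor rC ℓD :=
  (Ideal.Quotient.mk _).comp
    (Algebra.TensorProduct.includeLeft (R := ℤ) (S := ℤ) (B := D)).toRingHom

/-- The ring homomorphism from the right factor into `ringTensor`. -/
noncomputable def ringTensor.inr {C D : Type v} [CommRing C] [CommRing D]
    (rC : A →+* C) (ℓD : A →+* D) : D →+* ringTensor rC ℓD :=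
  (Ideal.Quotient.mk _).comp
    (Algebra.TensorProduct.includeRight (R := ℤ) (A := C)).toRingHom

end RingTensor

/-- A bimodule whose underlying carrier is a commutative ring, with the two
actions given by ring homomorphisms (e.g. Bott–Samelson bimodules). -/
structure RingBimod (A₁ : Type u) (A₂ : Type u) [CommRing A₁] [CommRing A₂] :
    Type (max u (v+1)) where
  carrier : Type v
  [ring : CommRing carrier]
  left : A₁ →+* carrier
  right : A₂ →+* carrier

attribute [instance] RingBimod.ring

namespace RingBimod

variable {A₁ A₂ A₃ : Type u} [CommRing A₁] [CommRing A₂] [CommRing A₃]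

/-- The underlying bimodule of a `RingBimod`. -/
noncomputable def toBimod (M : RingBimod A₁ A₂) : Bimod A₁ A₂ :=
  Bimod.ofRing M.left M.right

/-- The unit `(A,A)`-bimodule `A`. -/
noncomputable def unit (A : Type u) [CommRing A] : RingBimod A A :=
  ⟨A, RingHom.id A, RingHom.id A⟩

/-- Tensor product `M ⊗_{A₂} N` of ring-bimodules. -/
noncomputable def tensor (M : RingBimod.{u,v} A₁ A₂) (N : RingBimod.{u,v} A₂ A₃) :
    RingBimod.{u,v} A₁ A₃ where
  carrier := ringTensor M.right N.left
  left := (ringTensor.inl M.right N.left).comp M.left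
  right := (ringTensor.inr M.right N.left).comp N.right

end RingBimod

section BS

variable {A : Type u} [CommRing A] {τ : Type*}

/-- The elementary Soergel bimodule `A ⊗_{S} A` attached to a subring `S ⊆ A`
(e.g. the invariants of a reflection). -/
noncomputable def elemB (S : Subring A) : RingBimod A A :=
  ⟨ringTensor S.subtype S.subtype,
    ringTensor.inl S.subtype S.subtype,
    ringTensor.inr S.subtype S.subtype⟩

/-- Bott–Samelson bimodules: `BSgen f [t₁, …, t_m] = B_{t₁} ⊗_A ⋯ ⊗_A B_{t_m}`
where `B_t = A ⊗_{f t} A`. -/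
noncomputable def BSgen (f : τ → Subring A) : List τ → RingBimod A A
  | [] => RingBimod.unit A
  | t :: l => (elemB (f t)).tensor (BSgen f l)

/-- The `i`-th slot map `A → B_{t₁} ⊗_A ⋯ ⊗_A B_{t_m}` (for `0 ≤ i ≤ m`). -/
noncomputable def BSslot (f : τ → Subring A) : (l : List τ) → ℕ → (A →+* (BSgen f l).carrier)
  | [], _ => RingHom.id A
  | t :: l, 0 =>
      ((ringTensor.inl (elemB (f t)).right (BSgen f l).left).comp
        (ringTensor.inl (f t).subtype (f t).subtype))
  | _ :: l, (i+1) =>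
      ((ringTensor.inr _ _).comp (BSslot f l i))

end BS

namespace BimodHom

variable {A₁ A₂ : Type u} [CommRing A₁] [CommRing A₂] {M N P : Bimod.{u,v} A₁ A₂}

theorem ext' {f g : BimodHom M N} (h : f.toFun = g.toFun) : f = g := by
  cases f; cases g; simpa using h

/-- The identity bimodule homomorphism. -/
def id (M : Bimod A₁ A₂) : BimodHom M M :=
  ⟨AddMonoidHom.id _, fun _ _ => rfl, fun _ _ => rfl⟩

/-- Composition of bimodule homomorphisms. -/
def comp (g : BimodHom N P) (f : BimodHom M N) : BimodHom M P :=
  ⟨g.toFun.comp f.toFun,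
    fun a x => by simp [f.map_actL, g.map_actL],
    fun a x => by simp [f.map_actR, g.map_actR]⟩

instance : Zero (BimodHom M N) :=
  ⟨⟨0, fun a x => by simp [map_zero], fun a x => by simp [map_zero]⟩⟩

instance : Add (BimodHom M N) :=
  ⟨fun f g => ⟨f.toFun + g.toFun,
    fun a x => by simp [f.map_actL, g.map_actL, map_add],
    fun a x => by simp [f.map_actR, g.map_actR, map_add]⟩⟩

instance : Neg (BimodHom M N) :=
  ⟨fun f => ⟨-f.toFun,
    fun a x => by simp [f.map_actL, map_neg],
    fun a x => by simp [f.map_actR, map_neg]⟩⟩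

instance : SMul A₂ (BimodHom M N) :=
  ⟨fun a f => ⟨(N.actR a).toAddMonoidHom.comp f.toFun,
    fun b x => by simp [f.map_actL, N.smul_comm'],
    fun b x => by
      simp only [LinearMap.toAddMonoidHom_coe, AddMonoidHom.coe_comp, Function.comp_apply]
      rw [f.map_actR]
      have h : N.actR a * N.actR b = N.actR b * N.actR a := by
        rw [← map_mul, ← map_mul, mul_comm]
      calc (N.actR a) ((N.actR b) (f.toFun x)) = (N.actR a * N.actR b) (f.toFun x) := rfl
        _ = (N.actR b * N.actR a) (f.toFun x) := by rw [h]
        _ = (N.actR b) ((N.actR a) (f.toFun x)) := rfl⟩⟩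

@[simp] theorem zero_toFun (x : M.carrier) : (0 : BimodHom M N).toFun x = 0 := rfl
@[simp] theorem add_toFun (f g : BimodHom M N) (x : M.carrier) :
    (f + g).toFun x = f.toFun x + g.toFun x := rfl
@[simp] theorem neg_toFun (f : BimodHom M N) (x : M.carrier) :
    (-f).toFun x = -(f.toFun x) := rfl
@[simp] theorem smul_toFun (a : A₂) (f : BimodHom M N) (x : M.carrier) :
    (a • f).toFun x = N.actR a (f.toFun x) := rfl

instance : AddCommGroup (BimodHom M N) where
  add_assoc f g h := ext' (by ext x; simp [add_assoc])
  zero_add f := ext' (by ext x; simp)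
  add_zero f := ext' (by ext x; simp)
  add_comm f g := ext' (by ext x; simp [add_comm])
  neg_add_cancel f := ext' (by ext x; simp)
  nsmul := nsmulRec
  zsmul := zsmulRec

/-- The right action of `A₂` makes each homomorphism space an `A₂`-module. -/
instance : Module A₂ (BimodHom M N) where
  one_smul f := ext' (by ext x; simp [map_one])
  mul_smul a b f := ext' (by
    ext x
    simp only [smul_toFun, map_mul]
    rfl)
  smul_zero a := ext' (by ext x; simp)
  smul_add a f g := ext' (by ext x; simp)
  add_smul a b f := ext' (by
    ext x
    simp only [smul_toFun, add_toFun, map_add]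
    rfl)
  zero_smul f := ext' (by ext x; simp)

end BimodHom

section BaseChange

variable {A A' : Type u} [CommRing A] [CommRing A']

/-- The right `A`-module structure on the carrier of a bimodule. -/
noncomputable instance bimodRightModule {A₁ A₂ : Type u} [CommRing A₁] [CommRing A₂]
    (M : Bimod.{u,v} A₁ A₂) : Module A₂ M.carrier :=
  Module.compHom M.carrier M.actR

/-- The carrier of the base change `B ⊗_A A'` of a bimodule along `φ : A → A'`. -/
noncomputable def rightBaseChange (φ : A →+* A') (B : Bimod.{u,u} A A) : Type u :=
  letI : Module A A' := Module.compHom A' φ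
  TensorProduct A B.carrier A'

noncomputable instance (φ : A →+* A') (B : Bimod.{u,u} A A) :
    AddCommGroup (rightBaseChange φ B) := by
  unfold rightBaseChange
  letI : Module A A' := Module.compHom A' φ
  infer_instance

/-- The canonical comparison map `B ⊗_A A' → T` induced by an `(A,A)`-bimodule map
`η : B → T` (where `T` is an `(A',A')`-bimodule restricted along `φ`), sending
`b ⊗ a'` to `η(b)·a'`. -/
noncomputable def cmpMap (φ : A →+* A') (B : Bimod.{u,u} A A) (T : Bimod.{u,u} A' A')
    (η : BimodHom B (T.restrict φ φ)) : rightBaseChange φ B →+ T.carrier := by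
  unfold rightBaseChange
  letI : Module A A' := Module.compHom A' φ
  exact TensorProduct.liftAddHom
    { toFun := fun b =>
        { toFun := fun a' => T.actR a' (η.toFun b)
          map_zero' := by show T.actR 0 (η.toFun b) = 0; rw [map_zero]; rfl
          map_add' := fun a' b' => by
            show T.actR (a' + b') (η.toFun b) = _
            rw [map_add]
            rfl }
      map_zero' := by ext a'; simp [map_zero]; exact (T.actR a').map_zero
      map_add' := fun b b' => by ext a'; simp [map_add]; exact (T.actR a').map_add _ _ }
    (fun r b a' => by
      show T.actR a' (η.toFun (B.actR r b)) = T.actR (φ r * a') (η.toFun b)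
      rw [η.map_actR]
      show (T.actR a') ((T.actR (φ r)) (η.toFun b)) = (T.actR (φ r * a')) (η.toFun b)
      rw [map_mul]
      calc (T.actR a') ((T.actR (φ r)) (η.toFun b))
          = (T.actR a' * T.actR (φ r)) (η.toFun b) := rfl
        _ = (T.actR (φ r) * T.actR a') (η.toFun b) := by
            rw [← map_mul, ← map_mul, mul_comm]
        _ = (T.actR (φ r)) ((T.actR a') (η.toFun b)) := rfl)

/-- `T` (an `(A',A')`-bimodule) *is the base change* of the `(A,A)`-bimodule `B`
along `φ : A → A'`, with its natural `A'`-bimodule structure: there is a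
bimodule map `η : B → T` such that the induced map `B ⊗_A A' → T`,
`b ⊗ a' ↦ η(b)·a'`, is bijective. -/
def IsBaseChangeOf (φ : A →+* A') (T : Bimod.{u,u} A' A') (B : Bimod.{u,u} A A) : Prop :=
  ∃ η : BimodHom B (T.restrict φ φ), Function.Bijective (cmpMap φ B T η)

end BaseChange

section Context

variable (k : Type u) [Field k] {W : Type u} [Group W]
variable (V : Type u) [AddCommGroup V] [Module k V]
variable [DistribMulAction W V] [SMulCommClass W k V]

/-- The fixed subspace `V^x` of `x : W` acting on `V`. -/
def fixedSubmodule (x : W) : Submodule k V where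
  carrier := {v | x • v = v}
  add_mem' := by
    intro a b ha hb
    simp only [Set.mem_setOf_eq, smul_add] at *
    rw [ha, hb]
  zero_mem' := smul_zero x
  smul_mem' := by
    intro c v hv
    simp only [Set.mem_setOf_eq] at *
    rw [smul_comm, hv]

variable {B : Type*} {M : CoxeterMatrix B}

/-- The representation of `W` on `V` is *reflection faithful*: it is faithful,
and for `x ∈ W` the fixed subspace `V^x` is a hyperplane if and only if `x` is
a reflection. -/
def IsReflectionFaithful (cs : CoxeterSystem M W) : Prop :=
  (∀ g h : W, (∀ v : V, g • v = h • v) → g = h) ∧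
  ∀ x : W,
    (Module.finrank k (V ⧸ fixedSubmodule k V x) = 1 ↔ cs.IsReflection x)

/-- Reflection faithfulness of the action of a reflection subgroup `G` (with
canonical Coxeter generators `SG`) on a stable subspace `U ⊆ V`. -/
def IsReflectionFaithfulOn (G : Subgroup W) (SG : Set W) (U : Submodule k V) : Prop :=
  (∀ g ∈ G, ∀ h ∈ G, (∀ v ∈ U, g • v = h • v) → g = h) ∧
  ∀ x ∈ G,
    ((Module.finrank k ↥(fixedSubmodule k V x ⊓ U) + 1 = Module.finrank k ↥U) ↔
      ∃ w ∈ G, ∃ t ∈ SG, x = w * t * w⁻¹)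

/-- `(R, ι)` is a symmetric algebra of the `k`-vector space `V`:
every linear map from `V` to a commutative `k`-algebra extends uniquely to `R`. -/
def IsSymmetricAlgebraOn {R : Type u} [CommRing R] [Algebra k R] (ι : V →ₗ[k] R) : Prop :=
  ∀ (A : Type u) (_ : CommRing A) (_ : Algebra k A) (f : V →ₗ[k] A),
    ∃! g : R →ₐ[k] A, ∀ v : V, g (ι v) = f v

/-- The set of reflections of `W` whose root (a nonzero `−1`-eigenvector)
lies in the subspace `Vr`. -/
def reflectionsWithRootIn (cs : CoxeterSystem M W) (Vr : Submodule k V) : Set W :=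
  {t : W | cs.IsReflection t ∧ ∃ v ∈ Vr, v ≠ 0 ∧ t • v = -v}

/-- The reflection subgroup generated by all reflections with root in `Vr`. -/
def reflSubgroup (cs : CoxeterSystem M W) (Vr : Submodule k V) : Subgroup W :=
  Subgroup.closure (reflectionsWithRootIn k V cs Vr)

/-- Dyer's canonical Coxeter generators of a reflection subgroup `Wr ⊆ W`:
the reflections `t ∈ Wr` such that the only reflection `t' ∈ Wr` with
`ℓ(t' t) < ℓ(t)` is `t` itself. -/
def canonicalGenerators (cs : CoxeterSystem M W) (Wr : Subgroup W) : Set W :=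
  {t : W | cs.IsReflection t ∧ t ∈ Wr ∧
    ∀ t' : W, cs.IsReflection t' → t' ∈ Wr →
      cs.length (t' * t) < cs.length t → t' = t}

/-- The subring of invariants `R^t` of `t : W` acting on `R`. -/
def fixedSubring (R : Type u) [CommRing R] [MulSemiringAction W R] (t : W) : Subring R :=
  RingHom.eqLocus (MulSemiringAction.toRingHom W R t) (RingHom.id R)

/-- Membership in the category of Soergel bimodules generated (under tensor
products, finite direct sums, grading shifts and direct summands) by the
elementary bimodules `R ⊗_{R^t} R`, `t ∈ S`: equivalently, the retracts of
finite direct sums of Bott–Samelson bimodules for words in `S`. -/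
def IsSoergelCat {R : Type u} [CommRing R] (f : W → Subring R) (S : Set W)
    (Mo : Bimod.{u,u} R R) : Prop :=
  ∃ (n : ℕ) (ls : Fin n → List W), (∀ i, ∀ t ∈ ls i, t ∈ S) ∧
    IsRetractOf Mo (Bimod.dsum fun i => (BSgen f (ls i)).toBimod)

end Context

/-! ### Auxiliary machinery for the proof -/

section AuxRT

variable {A : Type u} [CommRing A] {C D : Type v} [CommRing C] [CommRing D]
variable (rC : A →+* C) (ℓD : A →+* D)

theorem ringTensor.inl_eq_inr (a : A) :
    ringTensor.inl rC ℓD (rC a) = ringTensor.inr rC ℓD (ℓD a) := by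
  show Ideal.Quotient.mk _ _ = Ideal.Quotient.mk _ _
  rw [Ideal.Quotient.eq]
  exact Ideal.subset_span ⟨a, rfl⟩

theorem ringTensor.mk_tmul (c : C) (d : D) :
    (Ideal.Quotient.mk _ (c ⊗ₜ[ℤ] d) : ringTensor rC ℓD) =
      ringTensor.inl rC ℓD c * ringTensor.inr rC ℓD d := by
  have e : c ⊗ₜ[ℤ] d = (c ⊗ₜ[ℤ] (1 : D)) * ((1 : C) ⊗ₜ[ℤ] d) := by
    rw [Algebra.TensorProduct.tmul_mul_tmul, mul_one, one_mul]
  exact (congrArg (Ideal.Quotient.mk _) e).trans (map_mul (Ideal.Quotient.mk _) _ _)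

noncomputable def ringTensor.lift {E : Type*} [CommRing E] (g₁ : C →+* E) (g₂ : D →+* E)
    (h : ∀ a, g₁ (rC a) = g₂ (ℓD a)) : ringTensor rC ℓD →+* E :=
  Ideal.Quotient.lift _
    (Algebra.TensorProduct.productMap g₁.toIntAlgHom g₂.toIntAlgHom).toRingHom
    (fun x hx => by
      have hle : Ideal.span {x : TensorProduct ℤ C D |
          ∃ a : A, x = (Algebra.TensorProduct.includeLeft (S := ℤ) (rC a)) -
            (Algebra.TensorProduct.includeRight (ℓD a))} ≤
          RingHom.ker (Algebra.TensorProduct.productMap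
            g₁.toIntAlgHom g₂.toIntAlgHom).toRingHom := by
        rw [Ideal.span_le]
        rintro _ ⟨a, rfl⟩
        simp only [SetLike.mem_coe, RingHom.mem_ker, map_sub]
        simp only [AlgHom.toRingHom_eq_coe, RingHom.coe_coe,
          Algebra.TensorProduct.includeLeft_apply, Algebra.TensorProduct.includeRight_apply,
          Algebra.TensorProduct.productMap_apply_tmul, map_one, mul_one, one_mul]
        show (g₁ : C →+* E) (rC a) - (g₂ : D →+* E) (ℓD a) = 0
        rw [h a, sub_self]
      exact hle hx)

theorem ringTensor.lift_inl {E : Type*} [CommRing E] (g₁ : C →+* E) (g₂ : D →+* E)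
    (h : ∀ a, g₁ (rC a) = g₂ (ℓD a)) (c : C) :
    ringTensor.lift rC ℓD g₁ g₂ h (ringTensor.inl rC ℓD c) = g₁ c := by
  change (Algebra.TensorProduct.productMap g₁.toIntAlgHom g₂.toIntAlgHom) (c ⊗ₜ[ℤ] (1 : D)) = _
  simp

theorem ringTensor.lift_inr {E : Type*} [CommRing E] (g₁ : C →+* E) (g₂ : D →+* E)
    (h : ∀ a, g₁ (rC a) = g₂ (ℓD a)) (d : D) :
    ringTensor.lift rC ℓD g₁ g₂ h (ringTensor.inr rC ℓD d) = g₂ d := by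
  change (Algebra.TensorProduct.productMap g₁.toIntAlgHom g₂.toIntAlgHom) ((1 : C) ⊗ₜ[ℤ] d) = _
  simp

set_option synthInstance.maxHeartbeats 1000000 in
theorem ringTensor.hom_ext {E : Type*} [CommRing E] (F G : ringTensor rC ℓD →+* E)
    (h1 : ∀ c, F (ringTensor.inl rC ℓD c) = G (ringTensor.inl rC ℓD c))
    (h2 : ∀ d, F (ringTensor.inr rC ℓD d) = G (ringTensor.inr rC ℓD d)) : F = G := by
  ext x
  obtain ⟨y, rfl⟩ := Ideal.Quotient.mk_surjective x
  induction y using TensorProduct.induction_on with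
  | zero => rw [map_zero]; exact (map_zero F).trans (map_zero G).symm
  | tmul c d => rw [ringTensor.mk_tmul, map_mul, map_mul, h1, h2]
  | add a b ha hb =>
    rw [map_add]
    exact (map_add F _ _).trans (by rw [ha, hb]; exact (map_add G _ _).symm)

end AuxRT

section AuxBS

variable {A : Type u} [CommRing A] {τ : Type*} (f : τ → Subring A)

theorem BSgen_left_eq (l : List τ) (x : A) : (BSgen f l).left x = BSslot f l 0 x := by
  cases l <;> rfl

theorem BSgen_right_eq (l : List τ) (x : A) :
    (BSgen f l).right x = BSslot f l l.length x := by
  induction l with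
  | nil => rfl
  | cons t l ih =>
    show ringTensor.inr _ _ ((BSgen f l).right x) = ringTensor.inr _ _ (BSslot f l l.length x)
    rw [ih]

theorem BSslot_adj (l : List τ) (j : ℕ) (h : j < l.length) (x : A)
    (hx : x ∈ f (l.get ⟨j, h⟩)) : BSslot f l j x = BSslot f l (j + 1) x := by
  induction l generalizing j with
  | nil => exact absurd h (Nat.not_lt_zero j)
  | cons t l ih =>
    cases j with
    | zero =>
      show (ringTensor.inl _ _) ((ringTensor.inl _ _) x) = (ringTensor.inr _ _) (BSslot f l 0 x)
      have e1 : (ringTensor.inl (f t).subtype (f t).subtype) x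
          = (ringTensor.inr (f t).subtype (f t).subtype) x :=
        ringTensor.inl_eq_inr _ _ (⟨x, hx⟩ : f t)
      rw [e1]
      have e2 := ringTensor.inl_eq_inr ((elemB (f t)).right) ((BSgen f l).left) x
      rw [← BSgen_left_eq]
      exact e2
    | succ j =>
      show (ringTensor.inr _ _) (BSslot f l j x) = (ringTensor.inr _ _) (BSslot f l (j + 1) x)
      rw [ih j (Nat.lt_of_succ_lt_succ h) hx]

theorem BSslot_eq_last (l : List τ) (x : A) (hx : ∀ t ∈ l, x ∈ f t) (j : ℕ)
    (h : j ≤ l.length) : BSslot f l j x = BSslot f l l.length x := by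
  induction l generalizing j with
  | nil =>
    obtain rfl : j = 0 := Nat.le_zero.mp h
    rfl
  | cons t l ih =>
    cases j with
    | zero =>
      rw [BSslot_adj f (t :: l) 0 (Nat.succ_pos _) x (hx t List.mem_cons_self)]
      show (ringTensor.inr _ _) (BSslot f l 0 x) = (ringTensor.inr _ _) (BSslot f l l.length x)
      rw [ih (fun t' ht' => hx t' (List.mem_cons_of_mem t ht')) 0 (Nat.zero_le _)]
    | succ j =>
      show (ringTensor.inr _ _) (BSslot f l j x) = (ringTensor.inr _ _) (BSslot f l l.length x)
      rw [ih (fun t' ht' => hx t' (List.mem_cons_of_mem t ht')) j (Nat.le_of_succ_le_succ h)]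

theorem BSgen_hom_ext {E : Type*} [CommRing E] : ∀ (l : List τ)
    (F G : (BSgen f l).carrier →+* E),
    (∀ j, j ≤ l.length → ∀ x, F (BSslot f l j x) = G (BSslot f l j x)) → F = G
  | [], F, G, h => by
    ext x
    exact h 0 (le_refl 0) x
  | t :: l, F, G, h => by
    apply ringTensor.hom_ext
    · intro c
      have h1 : F.comp (ringTensor.inl ((elemB (f t)).right) ((BSgen f l).left)) =
          G.comp (ringTensor.inl ((elemB (f t)).right) ((BSgen f l).left)) := by
        apply ringTensor.hom_ext
        · intro a
          exact h 0 (Nat.zero_le _) a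
        · intro a
          have key : (ringTensor.inl ((elemB (f t)).right) ((BSgen f l).left))
              ((ringTensor.inr (f t).subtype (f t).subtype) a) = BSslot f (t :: l) 1 a := by
            have e3 : ringTensor.inr ((elemB (f t)).right) ((BSgen f l).left)
                ((BSgen f l).left a) = ringTensor.inr ((elemB (f t)).right) ((BSgen f l).left)
                (BSslot f l 0 a) := by rw [BSgen_left_eq]
            exact (ringTensor.inl_eq_inr ((elemB (f t)).right) ((BSgen f l).left) a).trans e3
          exact (congrArg F key).trans
            ((h 1 (Nat.succ_le_succ (Nat.zero_le _)) a).trans (congrArg G key.symm))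
      exact RingHom.congr_fun h1 c
    · intro d
      have h2 : F.comp (ringTensor.inr ((elemB (f t)).right) ((BSgen f l).left)) =
          G.comp (ringTensor.inr ((elemB (f t)).right) ((BSgen f l).left)) :=
        BSgen_hom_ext l _ _ (fun j hj x => h (j + 1) (Nat.succ_le_succ hj) x)
      exact RingHom.congr_fun h2 d

noncomputable def elemBlift {E : Type*} [CommRing E] (S : Subring A) (g₀ g₁ : A →+* E)
    (h : ∀ x ∈ S, g₀ x = g₁ x) : (elemB S).carrier →+* E :=
  ringTensor.lift _ _ g₀ g₁ (fun s => h s s.2)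

theorem elemBlift_inl {E : Type*} [CommRing E] (S : Subring A) (g₀ g₁ : A →+* E)
    (h : ∀ x ∈ S, g₀ x = g₁ x) (x : A) :
    elemBlift S g₀ g₁ h (ringTensor.inl S.subtype S.subtype x) = g₀ x :=
  ringTensor.lift_inl _ _ _ _ _ x

theorem elemBlift_right {E : Type*} [CommRing E] (S : Subring A) (g₀ g₁ : A →+* E)
    (h : ∀ x ∈ S, g₀ x = g₁ x) (x : A) :
    elemBlift S g₀ g₁ h ((elemB S).right x) = g₁ x :=
  ringTensor.lift_inr _ _ _ _ _ x

noncomputable def BSlift {E : Type*} [CommRing E] : (l : List τ) → (g : ℕ → (A →+* E)) →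
    (∀ (j : ℕ) (h : j < l.length), ∀ x ∈ f (l.get ⟨j, h⟩), g j x = g (j + 1) x) →
    {G : (BSgen f l).carrier →+* E // ∀ j, j ≤ l.length → ∀ x, G (BSslot f l j x) = g j x}
  | [], g, _ => ⟨g 0, fun j hj x => by
      obtain rfl : j = 0 := Nat.le_zero.mp hj
      rfl⟩
  | t :: l, g, hc =>
    let prev := BSlift l (fun j => g (j + 1))
      (fun j h x hx => hc (j + 1) (Nat.succ_lt_succ h) x hx)
    ⟨ringTensor.lift ((elemB (f t)).right) ((BSgen f l).left)
      (elemBlift (f t) (g 0) (g 1) (fun x hx => hc 0 (Nat.succ_pos _) x hx))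
      prev.1
      (fun a =>
        (elemBlift_right _ _ _ _ a).trans
          ((prev.2 0 (Nat.zero_le _) a).symm.trans
            (congrArg prev.1 (BSgen_left_eq f l a)).symm)),
     fun j hj x => by
      cases j with
      | zero =>
        exact (ringTensor.lift_inl ((elemB (f t)).right) ((BSgen f l).left) _ _ _
          (ringTensor.inl (f t).subtype (f t).subtype x)).trans (elemBlift_inl _ _ _ _ x)
      | succ j =>
        exact (ringTensor.lift_inr ((elemB (f t)).right) ((BSgen f l).left) _ _ _
          (BSslot f l j x)).trans (prev.2 j (Nat.le_of_succ_le_succ hj) x)⟩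

end AuxBS



section AuxGeom

variable {k W V : Type u} [Field k] [Group W] [AddCommGroup V] [Module k V]
  [FiniteDimensional k V] [DistribMulAction W V] [SMulCommClass W k V]
  {B : Type*} {M : CoxeterMatrix B} (cs : CoxeterSystem M W)

theorem eq_neg_self_imp_zero (hchar : (2 : k) ≠ 0) {x : V} (h : x = -x) : x = 0 := by
  have h2 : (2 : k) • x = 0 := by
    rw [two_smul]
    nth_rewrite 2 [h]
    exact add_neg_cancel x
  rcases smul_eq_zero.mp h2 with h' | h'
  · exact absurd h' hchar
  · exact h'

theorem smul_smul_refl {t : W} (ht : cs.IsReflection t) (v : V) : t • t • v = v := by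
  rw [← mul_smul, ht.mul_self, one_smul]

/-- The `-1`-eigenspace of a reflection is spanned by any single root. -/
theorem eig_neg (hchar : (2 : k) ≠ 0) (hfaithful : IsReflectionFaithful k V cs)
    {t : W} (ht : cs.IsReflection t) {β : V} (hβ0 : β ≠ 0) (hβ : t • β = -β) (v : V) :
    t • v - v ∈ Submodule.span k {β} := by
  set Em : Submodule k V :=
    { carrier := {x : V | t • x = -x}
      add_mem' := by
        intro a b ha hb
        simp only [Set.mem_setOf_eq, smul_add] at *
        rw [ha, hb, neg_add]
      zero_mem' := by simp only [Set.mem_setOf_eq, smul_zero, neg_zero]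
      smul_mem' := by
        intro c x hx
        simp only [Set.mem_setOf_eq] at *
        rw [smul_comm, hx, smul_neg] } with hEm
  have hmem : t • v - v ∈ Em := by
    show t • (t • v - v) = -(t • v - v)
    rw [smul_sub, smul_smul_refl cs ht, neg_sub]
  have hdisj : Disjoint Em (fixedSubmodule k V t) := by
    rw [Submodule.disjoint_def]
    intro x hx1 hx2
    have e1 : t • x = -x := hx1
    have e2 : t • x = x := hx2
    exact eq_neg_self_imp_zero hchar (e2.symm.trans e1)
  have hq : Module.finrank k (V ⧸ fixedSubmodule k V t) = 1 := (hfaithful.2 t).mpr ht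
  have hfr : Module.finrank k (fixedSubmodule k V t) + 1 = Module.finrank k V := by
    have := Submodule.finrank_quotient_add_finrank (fixedSubmodule k V t)
    omega
  have hsupinf := Submodule.finrank_sup_add_finrank_inf_eq Em (fixedSubmodule k V t)
  rw [disjoint_iff.mp hdisj, finrank_bot] at hsupinf
  have hle : Module.finrank k ↥(Em ⊔ fixedSubmodule k V t) ≤ Module.finrank k V :=
    Submodule.finrank_le _
  have hEm1 : Module.finrank k Em ≤ 1 := by omega
  have hspan : Submodule.span k {β} ≤ Em := by
    rw [Submodule.span_le, Set.singleton_subset_iff]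
    exact hβ
  have heq : Submodule.span k {β} = Em :=
    Submodule.eq_of_le_of_finrank_le hspan
      (le_trans hEm1 (finrank_span_singleton hβ0).symm.le)
  rw [← heq] at hmem
  exact hmem

/-- The reflection subgroup `W_r` stabilises `V_r`. -/
theorem reflSubgroup_smul_mem (hchar : (2 : k) ≠ 0)
    (hfaithful : IsReflectionFaithful k V cs) (Vr : Submodule k V)
    {w : W} (hw : w ∈ reflSubgroup k V cs Vr) : ∀ v ∈ Vr, w • v ∈ Vr := by
  have main : ∀ v ∈ Vr, w • v ∈ Vr ∧ w⁻¹ • v ∈ Vr := by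
    induction hw using Subgroup.closure_induction with
    | mem t' ht' =>
      obtain ⟨hrefl', β, hβVr, hβ0, hβroot⟩ := ht'
      have hstep : ∀ v ∈ Vr, t' • v ∈ Vr := by
        intro v hv
        have h1 : t' • v - v ∈ Submodule.span k {β} :=
          eig_neg cs hchar hfaithful hrefl' hβ0 hβroot v
        have h2 : t' • v - v ∈ Vr := by
          have : Submodule.span k {β} ≤ Vr := by
            rw [Submodule.span_le, Set.singleton_subset_iff]; exact hβVr
          exact this h1
        have : t' • v = v + (t' • v - v) := by abel
        rw [this]
        exact add_mem hv h2
      intro v hv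
      refine ⟨hstep v hv, ?_⟩
      rw [hrefl'.inv]
      exact hstep v hv
    | one =>
      intro v hv
      simp only [one_smul, inv_one]
      exact ⟨hv, hv⟩
    | mul x y _ _ ihx ihy =>
      intro v hv
      constructor
      · rw [mul_smul]
        exact (ihx _ (ihy v hv).1).1
      · rw [mul_inv_rev, mul_smul]
        exact (ihy _ (ihx v hv).2).2
    | inv x _ ihx =>
      intro v hv
      rw [inv_inv]
      exact ⟨(ihx v hv).2, (ihx v hv).1⟩
  exact fun v hv => (main v hv).1

/-- Key geometric data attached to a canonical generator `t` of `W_r`: a root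
`α ∈ V_r` and a projection onto the line `k α` along the fixed hyperplane. -/
theorem key_data (hchar : (2 : k) ≠ 0) (hfaithful : IsReflectionFaithful k V cs)
    (Vr : Submodule k V)
    (hVrfaithful : IsReflectionFaithfulOn k V (reflSubgroup k V cs Vr)
      (canonicalGenerators cs (reflSubgroup k V cs Vr)) Vr)
    {t : W} (ht : t ∈ canonicalGenerators cs (reflSubgroup k V cs Vr)) :
    ∃ (α : V) (p : V →ₗ[k] V), α ∈ Vr ∧ α ≠ 0 ∧ t • α = -α ∧
      (∀ v, p v ∈ Submodule.span k {α}) ∧ (∀ u ∈ fixedSubmodule k V t, p u = 0) ∧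
      p α = α ∧ (∀ v, v - p v ∈ fixedSubmodule k V t) := by
  have hrefl : cs.IsReflection t := ht.1
  have htW : t ∈ reflSubgroup k V cs Vr := ht.2.1
  have hq : Module.finrank k (V ⧸ fixedSubmodule k V t) = 1 := (hfaithful.2 t).mpr hrefl
  have hfr : Module.finrank k (fixedSubmodule k V t) + 1 = Module.finrank k V := by
    have := Submodule.finrank_quotient_add_finrank (fixedSubmodule k V t)
    omega
  have hWr : Module.finrank k ↥(fixedSubmodule k V t ⊓ Vr) + 1 = Module.finrank k ↥Vr :=
    (hVrfaithful.2 t htW).mpr ⟨1, one_mem _, t, ht, by rw [one_mul, inv_one, mul_one]⟩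
  -- find v₀ ∈ Vr not fixed by t
  have hv0 : ∃ v₀ ∈ Vr, ¬ (t • v₀ = v₀) := by
    by_contra hcon
    push_neg at hcon
    have hle : Vr ≤ fixedSubmodule k V t := fun v hv => hcon v hv
    have : fixedSubmodule k V t ⊓ Vr = Vr := inf_eq_right.mpr hle
    rw [this] at hWr
    omega
  obtain ⟨v₀, hv₀Vr, hv₀⟩ := hv0
  set α := v₀ - t • v₀ with hα
  have hαroot : t • α = -α := by
    rw [hα, smul_sub, smul_smul_refl cs hrefl, neg_sub]
  have hα0 : α ≠ 0 := by
    rw [hα, sub_ne_zero]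
    exact fun h => hv₀ h.symm
  have hαVr : α ∈ Vr := sub_mem hv₀Vr
    (reflSubgroup_smul_mem cs hchar hfaithful Vr htW v₀ hv₀Vr)
  have hαnot : α ∉ fixedSubmodule k V t := by
    intro hmem
    have hfix : t • α = α := hmem
    exact hα0 (eq_neg_self_imp_zero hchar (hfix.symm.trans hαroot))
  -- IsCompl (fixedSubmodule) (span α)
  have hdisj : Disjoint (fixedSubmodule k V t) (Submodule.span k {α}) := by
    rw [Submodule.disjoint_def]
    intro x hx1 hx2
    obtain ⟨c, rfl⟩ := Submodule.mem_span_singleton.mp hx2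
    have e1 : t • (c • α) = c • α := hx1
    have e2 : t • (c • α) = -(c • α) := by rw [smul_comm, hαroot, smul_neg]
    exact eq_neg_self_imp_zero hchar (e1.symm.trans e2)
  have hsupinf := Submodule.finrank_sup_add_finrank_inf_eq
    (fixedSubmodule k V t) (Submodule.span k {α})
  rw [disjoint_iff.mp hdisj, finrank_bot, finrank_span_singleton hα0] at hsupinf
  have htop : fixedSubmodule k V t ⊔ Submodule.span k {α} = ⊤ := by
    apply Submodule.eq_top_of_finrank_eq
    have hle : Module.finrank k ↥(fixedSubmodule k V t ⊔ Submodule.span k {α}) ≤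
        Module.finrank k V := Submodule.finrank_le _
    omega
  have hcompl : IsCompl (fixedSubmodule k V t) (Submodule.span k {α}) :=
    ⟨hdisj, codisjoint_iff.mpr htop⟩
  set proj := Submodule.projectionOnto (Submodule.span k {α})
    (fixedSubmodule k V t) hcompl.symm with hproj
  refine ⟨α, (Submodule.span k {α}).subtype.comp proj, hαVr, hα0, hαroot, ?_, ?_, ?_, ?_⟩
  · intro v
    exact ((proj v : Submodule.span k {α})).2
  · intro u hu
    show ((proj u : Submodule.span k {α}) : V) = 0
    rw [Submodule.linearProjOfIsCompl_apply_right' hcompl.symm hu]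
    rfl
  · show ((proj α : Submodule.span k {α}) : V) = α
    have := Submodule.linearProjOfIsCompl_apply_left hcompl.symm
      (⟨α, Submodule.mem_span_singleton_self α⟩ : Submodule.span k {α})
    exact congrArg Subtype.val this
  · intro v
    have hker : proj (v - (proj v : V)) = 0 := by
      rw [map_sub]
      have : proj ((proj v : V)) = proj v :=
        Submodule.linearProjOfIsCompl_apply_left hcompl.symm (proj v)
      rw [this, sub_self]
    have : v - ((Submodule.span k {α}).subtype.comp proj) v ∈ LinearMap.ker proj := hker
    rwa [Submodule.linearProjOfIsCompl_ker] at this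

end AuxGeom


section AuxInv

variable {k W V : Type u} [Field k] [Group W] [AddCommGroup V] [Module k V]
  [FiniteDimensional k V] [DistribMulAction W V] [SMulCommClass W k V]
  {B : Type*} {M : CoxeterMatrix B} (cs : CoxeterSystem M W)
  {R : Type u} [CommRing R] [Algebra k R] [MulSemiringAction W R] [SMulCommClass W k R]

/-- Two algebra maps out of a symmetric algebra agreeing on `V` are equal. -/
theorem algHom_ext_of_sym (ι : V →ₗ[k] R) (hsym : IsSymmetricAlgebraOn k V ι)
    {E : Type u} [CommRing E] [Algebra k E] (φ ψ : R →ₐ[k] E)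
    (h : ∀ v, φ (ι v) = ψ (ι v)) : φ = ψ := by
  obtain ⟨g, hg, hu⟩ := hsym E inferInstance inferInstance (φ.toLinearMap.comp ι)
  have h1 : φ = g := hu φ (fun v => rfl)
  have h2 : ψ = g := hu ψ (fun v => (h v).symm)
  rw [h1, h2]

/-- Invariants of a reflection inside the symmetric algebra lie in the
subalgebra generated by the fixed hyperplane and the square of the root. -/
theorem fixed_mem_adjoin (hchar : (2 : k) ≠ 0)
    (ι : V →ₗ[k] R) (hsym : IsSymmetricAlgebraOn k V ι)
    (hcompat : ∀ (w : W) (v : V), w • (ι v) = ι (w • v))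
    {t : W} (hq : Module.finrank k (V ⧸ fixedSubmodule k V t) = 1)
    {α : V} (hα0 : α ≠ 0) (hαroot : t • α = -α) (hαn : α ∉ fixedSubmodule k V t)
    {r : R} (hr : t • r = r) :
    r ∈ Algebra.adjoin k ((ι '' (fixedSubmodule k V t : Set V)) ∪ {ι α ^ 2}) := by
  classical
  set Vt := fixedSubmodule k V t with hVt
  have hfr : Module.finrank k Vt + 1 = Module.finrank k V := by
    have := Submodule.finrank_quotient_add_finrank Vt
    omega
  -- complement
  have hdisj : Disjoint Vt (Submodule.span k {α}) := by
    rw [Submodule.disjoint_def]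
    intro x hx1 hx2
    obtain ⟨c, rfl⟩ := Submodule.mem_span_singleton.mp hx2
    have e1 : t • (c • α) = c • α := hx1
    have e2 : t • (c • α) = -(c • α) := by rw [smul_comm, hαroot, smul_neg]
    exact eq_neg_self_imp_zero hchar (e1.symm.trans e2)
  have hsupinf := Submodule.finrank_sup_add_finrank_inf_eq Vt (Submodule.span k {α})
  rw [disjoint_iff.mp hdisj, finrank_bot, finrank_span_singleton hα0] at hsupinf
  have htop : Vt ⊔ Submodule.span k {α} = ⊤ := by
    apply Submodule.eq_top_of_finrank_eq
    have hle : Module.finrank k ↥(Vt ⊔ Submodule.span k {α}) ≤ Module.finrank k V :=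
      Submodule.finrank_le _
    omega
  -- adapted basis
  set d := Module.finrank k Vt with hd
  set b₀ : Module.Basis (Fin d) k Vt := Module.finBasis k Vt with hb₀
  set fwd : (Vt × k) →ₗ[k] V :=
    LinearMap.coprod Vt.subtype (LinearMap.toSpanSingleton k V α) with hfwd
  have hfwd_apply : ∀ (u : Vt) (c : k), fwd (u, c) = (u : V) + c • α := fun u c => rfl
  have hinj : Function.Injective fwd := by
    rw [injective_iff_map_eq_zero]
    rintro ⟨u, c⟩ h0
    rw [hfwd_apply] at h0
    have h1 : (u : V) = -(c • α) := by
      rw [eq_neg_iff_add_eq_zero]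
      exact h0
    have h2 : (u : V) ∈ Submodule.span k {α} := by
      rw [h1]
      exact neg_mem (Submodule.smul_mem _ c (Submodule.mem_span_singleton_self α))
    have h3 : (u : V) = 0 := Submodule.disjoint_def.mp hdisj _ u.2 h2
    have h4 : c • α = 0 := by
      have := h1.symm
      rw [h3] at this
      rw [← neg_eq_zero, ← this]
    rcases smul_eq_zero.mp h4 with hc | hc
    · rw [Prod.ext_iff]
      exact ⟨Subtype.ext h3, hc⟩
    · exact absurd hc hα0
  have hsurj : Function.Surjective fwd := by
    intro v
    have hv : v ∈ Vt ⊔ Submodule.span k {α} := htop ▸ Submodule.mem_top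
    obtain ⟨y, hy, z, hz, rfl⟩ := Submodule.mem_sup.mp hv
    obtain ⟨c, rfl⟩ := Submodule.mem_span_singleton.mp hz
    exact ⟨(⟨y, hy⟩, c), rfl⟩
  set e : (Vt × k) ≃ₗ[k] V := LinearEquiv.ofBijective fwd ⟨hinj, hsurj⟩ with he
  set b : Module.Basis (Fin d ⊕ Unit) k V := (b₀.prod (Module.Basis.singleton Unit k)).map e with hb
  have hb_inl : ∀ i, b (Sum.inl i) = (b₀ i : V) := by
    intro i
    rw [hb, Module.Basis.map_apply]
    have h1 : (b₀.prod (Module.Basis.singleton Unit k)) (Sum.inl i) = (b₀ i, (0 : k)) := by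
      apply Prod.ext
      · rw [Module.Basis.prod_apply_inl_fst]
      · rw [Module.Basis.prod_apply_inl_snd]
    rw [h1]
    show fwd (b₀ i, (0 : k)) = _
    rw [hfwd_apply, zero_smul, add_zero]
  have hb_inr : b (Sum.inr ()) = α := by
    rw [hb, Module.Basis.map_apply]
    have h1 : (b₀.prod (Module.Basis.singleton Unit k)) (Sum.inr ()) = ((0 : Vt), (1 : k)) := by
      apply Prod.ext
      · rw [Module.Basis.prod_apply_inr_fst]
      · rw [Module.Basis.prod_apply_inr_snd, Module.Basis.singleton_apply]
    rw [h1]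
    show fwd ((0 : Vt), (1 : k)) = _
    rw [hfwd_apply, one_smul]
    show (0 : V) + α = α
    rw [zero_add]
  have hb_inl_fix : ∀ i, t • b (Sum.inl i) = b (Sum.inl i) := by
    intro i
    rw [hb_inl]
    exact (b₀ i).2
  -- the polynomial model
  set P := MvPolynomial (Fin d ⊕ Unit) k with hP
  set h : P →ₐ[k] R := MvPolynomial.aeval (fun i => ι (b i)) with hhdef
  set f : V →ₗ[k] P :=
    (Finsupp.linearCombination k (fun i => (MvPolynomial.X i : P))).comp
      (b.repr : V ≃ₗ[k] (Fin d ⊕ Unit →₀ k)).toLinearMap with hfdef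
  have hf_b : ∀ i, f (b i) = MvPolynomial.X i := by
    intro i
    rw [hfdef]
    show Finsupp.linearCombination k (fun i => (MvPolynomial.X i : P)) (b.repr (b i)) = _
    rw [Module.Basis.repr_self, Finsupp.linearCombination_single, one_smul]
  obtain ⟨g, hg, hgu⟩ := hsym P inferInstance inferInstance f
  have hhf : ∀ v, h (f v) = ι v := by
    have hlin : h.toLinearMap.comp f = ι := by
      apply Module.Basis.ext b
      intro i
      show h (f (b i)) = ι (b i)
      rw [hf_b]
      exact MvPolynomial.aeval_X _ i
    exact fun v => LinearMap.congr_fun hlin v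
  have hhg : ∀ r' : R, h (g r') = r' := by
    obtain ⟨g0, hg0, hg0u⟩ := hsym R inferInstance inferInstance ι
    have e1 : h.comp g = g0 := hg0u _ (fun v => by
      show h (g (ι v)) = ι v
      rw [hg v]
      exact hhf v)
    have e2 : AlgHom.id k R = g0 := hg0u _ (fun v => rfl)
    intro r'
    have := congrArg (fun F : R →ₐ[k] R => F r') (e1.trans e2.symm)
    exact this
  have hgh : ∀ Q : P, g (h Q) = Q := by
    have e1 : g.comp h = AlgHom.id k P := by
      apply MvPolynomial.algHom_ext
      intro i
      show g (h (MvPolynomial.X i)) = MvPolynomial.X i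
      rw [hhdef]
      show g ((MvPolynomial.aeval fun i => ι (b i)) (MvPolynomial.X i)) = _
      rw [MvPolynomial.aeval_X, hg, hf_b]
    intro Q
    exact congrArg (fun F : P →ₐ[k] P => F Q) e1
  -- the induced action on P
  set tA : R →ₐ[k] R := AlgHom.mk' (MulSemiringAction.toRingHom W R t)
    (fun c x => smul_comm t c x) with htA
  set sgnv : Fin d ⊕ Unit → P := Sum.elim (fun i => MvPolynomial.X (Sum.inl i))
    (fun _ => - MvPolynomial.X (Sum.inr ())) with hsgnv
  set T : P →ₐ[k] P := MvPolynomial.aeval sgnv with hT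
  have hTg : ∀ r' : R, T (g r') = g (t • r') := by
    have key : T.comp g = g.comp tA := by
      apply algHom_ext_of_sym ι hsym
      intro v
      show T (g (ι v)) = g (tA (ι v))
      have htAv : tA (ι v) = ι (t • v) := hcompat t v
      rw [hg v, htAv, hg (t • v)]
      have hlin : T.toLinearMap.comp f = f.comp (DistribMulAction.toLinearMap k V t) := by
        apply Module.Basis.ext b
        intro i
        show T (f (b i)) = f (t • b i)
        rw [hf_b]
        cases i with
        | inl a =>
          rw [hb_inl_fix a, hf_b]
          exact MvPolynomial.aeval_X _ _
        | inr u =>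
          cases u
          have hTX : T (MvPolynomial.X (Sum.inr ())) = - MvPolynomial.X (Sum.inr ()) :=
            MvPolynomial.aeval_X _ _
          rw [hTX, hb_inr, hαroot, map_neg, ← hb_inr, hf_b]
      exact LinearMap.congr_fun hlin v
    intro r'
    exact congrArg (fun F : R →ₐ[k] P => F r') key
  -- coefficientwise description of T
  set sgn : Fin d ⊕ Unit → k := Sum.elim (fun _ => (1 : k)) (fun _ => (-1 : k)) with hsgn
  have hsgnprod : ∀ m : (Fin d ⊕ Unit) →₀ ℕ,
      (m.prod fun i e => sgn i ^ e) = (-1 : k) ^ (m (Sum.inr ())) := by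
    intro m
    rw [Finsupp.prod]
    rw [Finset.prod_eq_single (Sum.inr ())]
    · rfl
    · rintro (a | u) hbmem hne
      · show (1 : k) ^ _ = 1
        rw [one_pow]
      · cases u
        exact absurd rfl hne
    · intro hnot
      have h0 : m (Sum.inr ()) = 0 := Finsupp.notMem_support_iff.mp hnot
      show sgn (Sum.inr ()) ^ m (Sum.inr ()) = 1
      rw [h0, pow_zero]
  have hprod : ∀ m : (Fin d ⊕ Unit) →₀ ℕ,
      (m.prod fun i e => sgnv i ^ e) = MvPolynomial.C ((-1 : k) ^ (m (Sum.inr ()))) *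
        (m.prod fun i e => MvPolynomial.X i ^ e) := by
    intro m
    have heach : ∀ (i : Fin d ⊕ Unit) (e : ℕ),
        sgnv i ^ e = MvPolynomial.C (sgn i ^ e) * MvPolynomial.X i ^ e := by
      rintro (a | u) e
      · show MvPolynomial.X (Sum.inl a) ^ e = MvPolynomial.C ((1 : k) ^ e) * _
        rw [one_pow, map_one, one_mul]
      · show (- MvPolynomial.X (Sum.inr u)) ^ e = MvPolynomial.C ((-1 : k) ^ e) * _
        rw [neg_pow, map_pow, map_neg, map_one]
    calc (m.prod fun i e => sgnv i ^ e)
        = m.prod (fun i e => MvPolynomial.C (sgn i ^ e) * MvPolynomial.X i ^ e) :=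
          Finsupp.prod_congr (fun i _ => heach i _)
      _ = (m.prod fun i e => MvPolynomial.C (sgn i ^ e)) *
            (m.prod fun i e => MvPolynomial.X i ^ e) := Finsupp.prod_mul
      _ = MvPolynomial.C (m.prod fun i e => sgn i ^ e) *
            (m.prod fun i e => MvPolynomial.X i ^ e) := by
          rw [map_finsuppProd]
      _ = _ := by rw [hsgnprod m]
  have hmono : ∀ (m : (Fin d ⊕ Unit) →₀ ℕ) (c : k),
      T (MvPolynomial.monomial m c) =
        MvPolynomial.monomial m ((-1 : k) ^ (m (Sum.inr ())) * c) := by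
    intro m c
    show (MvPolynomial.aeval sgnv) (MvPolynomial.monomial m c) = _
    rw [MvPolynomial.aeval_monomial, hprod m, MvPolynomial.monomial_eq, map_mul]
    rw [MvPolynomial.algebraMap_eq]
    ring
  have hcoeff : ∀ (Q : P) (mdeg : (Fin d ⊕ Unit) →₀ ℕ),
      MvPolynomial.coeff mdeg (T Q) =
        (-1 : k) ^ (mdeg (Sum.inr ())) * MvPolynomial.coeff mdeg Q := by
    intro Q
    induction Q using MvPolynomial.induction_on' with
    | monomial m c =>
      intro mdeg
      rw [hmono, MvPolynomial.coeff_monomial, MvPolynomial.coeff_monomial]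
      by_cases hm : m = mdeg
      · rw [if_pos hm, if_pos hm, hm]
      · rw [if_neg hm, if_neg hm, mul_zero]
    | add p q hp hq =>
      intro mdeg
      rw [map_add, MvPolynomial.coeff_add, MvPolynomial.coeff_add, hp, hq, mul_add]
  -- evenness of the exponents of the root variable
  have hQfix : T (g r) = g r := by rw [hTg r, hr]
  have heven : ∀ m ∈ (g r).support, Even (m (Sum.inr ())) := by
    intro m hm
    by_contra hodd
    rw [Nat.not_even_iff_odd] at hodd
    have h1 := hcoeff (g r) m
    rw [hQfix, hodd.neg_one_pow, neg_one_mul] at h1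
    have h2 : (2 : k) * MvPolynomial.coeff m (g r) = 0 := by
      rw [two_mul]
      nth_rewrite 1 [h1]
      rw [neg_add_cancel]
    rcases mul_eq_zero.mp h2 with hc | hc
    · exact hchar hc
    · exact (MvPolynomial.mem_support_iff.mp hm) hc
  -- g r lies in the adjoin of the fixed variables and the square
  have hmem : g r ∈ Algebra.adjoin k
      ((Set.range fun i : Fin d => (MvPolynomial.X (Sum.inl i) : P)) ∪
        {MvPolynomial.X (Sum.inr ()) ^ 2}) := by
    rw [← MvPolynomial.support_sum_monomial_coeff (g r)]
    apply Subalgebra.sum_mem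
    intro m hm
    rw [MvPolynomial.monomial_eq]
    apply mul_mem
    · rw [← MvPolynomial.algebraMap_eq]
      exact Subalgebra.algebraMap_mem _ _
    · rw [Finsupp.prod]
      apply Subalgebra.prod_mem
      rintro (a | u) hi
      · show MvPolynomial.X (Sum.inl a) ^ m (Sum.inl a) ∈ _
        have hx : (MvPolynomial.X (Sum.inl a) : P) ∈
            ((Set.range fun i : Fin d => (MvPolynomial.X (Sum.inl i) : P)) ∪
              {MvPolynomial.X (Sum.inr ()) ^ 2}) := Set.mem_union_left _ ⟨a, rfl⟩
        exact pow_mem (Algebra.subset_adjoin hx) _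
      · cases u
        show MvPolynomial.X (Sum.inr ()) ^ m (Sum.inr ()) ∈ _
        obtain ⟨c, hc⟩ := heven m hm
        rw [hc, ← two_mul, pow_mul]
        have hx : (MvPolynomial.X (Sum.inr ()) ^ 2 : P) ∈
            ((Set.range fun i : Fin d => (MvPolynomial.X (Sum.inl i) : P)) ∪
              {MvPolynomial.X (Sum.inr ()) ^ 2}) := Set.mem_union_right _ rfl
        exact pow_mem (Algebra.subset_adjoin hx) _
  -- transport back
  have hr' : r = h (g r) := (hhg r).symm
  rw [hr']
  have hmap : h (g r) ∈ (Algebra.adjoin k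
      ((Set.range fun i : Fin d => (MvPolynomial.X (Sum.inl i) : P)) ∪
        {MvPolynomial.X (Sum.inr ()) ^ 2})).map h := Subalgebra.mem_map.mpr ⟨g r, hmem, rfl⟩
  rw [AlgHom.map_adjoin] at hmap
  refine Algebra.adjoin_mono ?_ hmap
  rintro x ⟨y, hy, rfl⟩
  rcases hy with hy | hy
  · obtain ⟨a, rfl⟩ := hy
    left
    have : h (MvPolynomial.X (Sum.inl a)) = ι (b (Sum.inl a)) := MvPolynomial.aeval_X _ _
    rw [this, hb_inl a]
    exact ⟨(b₀ a : V), (b₀ a).2, rfl⟩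
  · rw [Set.mem_singleton_iff] at hy
    subst hy
    right
    have : h (MvPolynomial.X (Sum.inr ()) ^ 2) = ι (b (Sum.inr ())) ^ 2 := by
      rw [map_pow]
      congr 1
      exact MvPolynomial.aeval_X _ _
    rw [this, hb_inr]
    rfl

end AuxInv


section AuxFinal

theorem BSslot_overflow {A : Type u} [CommRing A] {τ : Type*} (f : τ → Subring A)
    (l : List τ) (j : ℕ) (h : l.length ≤ j) (x : A) :
    BSslot f l j x = BSslot f l l.length x := by
  induction l generalizing j with
  | nil => rfl
  | cons t l ih =>
    cases j with
    | zero => exact absurd h (by simp)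
    | succ j =>
      show (ringTensor.inr _ _) (BSslot f l j x) = (ringTensor.inr _ _) (BSslot f l l.length x)
      rw [ih j (Nat.le_of_succ_le_succ h)]

theorem algHom_ext_adjoin {k : Type u} [CommSemiring k] {R : Type u} [CommRing R] [Algebra k R]
    {s : Set R} {E : Type*} [CommRing E] [Algebra k E]
    (φ ψ : ↥(Algebra.adjoin k s) →ₐ[k] E)
    (h : ∀ (x : R) (hx : x ∈ s),
      φ ⟨x, Algebra.subset_adjoin hx⟩ = ψ ⟨x, Algebra.subset_adjoin hx⟩) : φ = ψ := by
  ext ⟨x, hx⟩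
  induction hx using Algebra.adjoin_induction with
  | mem x hx => exact h x hx
  | algebraMap r => exact (φ.commutes r).trans (ψ.commutes r).symm
  | add x y hx hy ihx ihy =>
    rw [show (⟨x + y, add_mem hx hy⟩ : ↥(Algebra.adjoin k s)) = ⟨x, hx⟩ + ⟨y, hy⟩ from rfl,
      map_add, map_add, ihx, ihy]
  | mul x y hx hy ihx ihy =>
    rw [show (⟨x * y, mul_mem hx hy⟩ : ↥(Algebra.adjoin k s)) = ⟨x, hx⟩ * ⟨y, hy⟩ from rfl,
      map_mul, map_mul, ihx, ihy]

theorem bimodIso_of_ringHom {A₁ A₂ : Type u} [CommRing A₁] [CommRing A₂]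
    {Mrb Nrb : RingBimod.{u,u} A₁ A₂} (F : Mrb.carrier →+* Nrb.carrier)
    (G : Nrb.carrier →+* Mrb.carrier)
    (hFl : ∀ a, F (Mrb.left a) = Nrb.left a) (hFr : ∀ a, F (Mrb.right a) = Nrb.right a)
    (hGF : ∀ x, G (F x) = x) (hFG : ∀ y, F (G y) = y) :
    BimodIso Mrb.toBimod Nrb.toBimod := by
  have hGl : ∀ a, G (Nrb.left a) = Mrb.left a := fun a => by rw [← hFl a, hGF]
  have hGr : ∀ a, G (Nrb.right a) = Mrb.right a := fun a => by rw [← hFr a, hGF]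
  refine ⟨⟨F.toAddMonoidHom, fun a x => ?_, fun a x => ?_⟩,
      ⟨G.toAddMonoidHom, fun a y => ?_, fun a y => ?_⟩, hGF, hFG⟩
  · let x' : Mrb.carrier := x
    show F (Mrb.left a * x') = Nrb.left a * F x'
    rw [map_mul, hFl]
  · let x' : Mrb.carrier := x
    show F (Mrb.right a * x') = Nrb.right a * F x'
    rw [map_mul, hFr]
  · let y' : Nrb.carrier := y
    show G (Nrb.left a * y') = Mrb.left a * G y'
    rw [map_mul, hGl]
  · let y' : Nrb.carrier := y
    show G (Nrb.right a * y') = Mrb.right a * G y'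
    rw [map_mul, hGr]

noncomputable def sigmaL {k : Type u} [Field k] {V R E : Type u} [AddCommGroup V] [Module k V]
    [CommRing R] [Algebra k R] [CommRing E] [Algebra k E]
    (ext : (V →ₗ[k] E) → (R →ₐ[k] E)) (c₁ : ℕ → (V →ₗ[k] E))
    (c₂ : ℕ → (V →ₗ[k] R)) (ρE : R →ₐ[k] E) : ℕ → ℕ → (R →ₐ[k] E)
  | 0, _ => ρE
  | (i+1), j => ext (c₁ j + (sigmaL ext c₁ c₂ ρE i (j+1)).toLinearMap.comp (c₂ j))

end AuxFinal

/-- For every finite sequence `(t₁, …, t_m)` of elements of `S_r` there is an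
isomorphism of `(R_r, R)`-bimodules
`B_{r,t₁} ⊗_{R_r} ⋯ ⊗_{R_r} B_{r,t_m} ⊗_{R_r} R ≅ R ⊗_R B^r_{t₁} ⊗_R ⋯ ⊗_R B^r_{t_m}`,
where `R` is the symmetric algebra of the reflection faithful `W`-representation
`V`, `R_r ⊆ R` is the symmetric algebra of `V_r`, `W_r` is the reflection
subgroup generated by the reflections with root in `V_r` (with canonical
Coxeter generators `S_r`, assumed to act reflection faithfully on `V_r`),
`B_{r,t} = R_r ⊗_{(R_r)^t} R_r` and `B^r_t = R ⊗_{R^t} R`, and on both sides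
`R` is an `(R_r, R)`-bimodule via `R_r ⊆ R`. -/
theorem bott_samelson_restriction_iso
    {k W V : Type u} [Field k] [Group W] [AddCommGroup V] [Module k V]
    [FiniteDimensional k V] [DistribMulAction W V] [SMulCommClass W k V]
    {B : Type*} {M : CoxeterMatrix B} (cs : CoxeterSystem M W)
    (hchar : (2 : k) ≠ 0)
    (hfaithful : IsReflectionFaithful k V cs)
    {R : Type u} [CommRing R] [Algebra k R] [MulSemiringAction W R] [SMulCommClass W k R]
    (ι : V →ₗ[k] R) (hsym : IsSymmetricAlgebraOn k V ι)
    (hcompat : ∀ (w : W) (v : V), w • (ι v) = ι (w • v))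
    (Vr : Submodule k V)
    (hVrfaithful : IsReflectionFaithfulOn k V (reflSubgroup k V cs Vr)
      (canonicalGenerators cs (reflSubgroup k V cs Vr)) Vr)
    (l : List W)
    (hl : ∀ t ∈ l, t ∈ canonicalGenerators cs (reflSubgroup k V cs Vr)) :
    BimodIso
      (((BSgen
            (fun t => Subring.comap (Algebra.adjoin k (ι '' (Vr : Set V))).val.toRingHom
              (fixedSubring R t)) l).tensor
          { carrier := R
            left := (Algebra.adjoin k (ι '' (Vr : Set V))).val.toRingHom
            right := RingHom.id R }).toBimod)
      ((RingBimod.tensor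
          { carrier := R
            left := (Algebra.adjoin k (ι '' (Vr : Set V))).val.toRingHom
            right := RingHom.id R }
          (BSgen (fixedSubring R) l)).toBimod) := by
  classical
  set Ar : Subalgebra k R := Algebra.adjoin k (ι '' (Vr : Set V)) with hAr
  set frmap : W → Subring ↥Ar :=
    (fun t => Subring.comap Ar.val.toRingHom (fixedSubring R t)) with hfrmap
  set RBm : RingBimod ↥Ar R :=
    { carrier := R, left := Ar.val.toRingHom, right := RingHom.id R } with hRBm
  let incl : ↥Ar →+* R := Ar.val.toRingHom
  let LC := ((BSgen frmap l).tensor RBm).carrier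
  let RC := (RBm.tensor (BSgen (fixedSubring R) l)).carrier
  let lin : (BSgen frmap l).carrier →+* LC := ringTensor.inl (BSgen frmap l).right RBm.left
  let ρ0 : R →+* LC := ringTensor.inr (BSgen frmap l).right RBm.left
  let lslot : ℕ → (↥Ar →+* LC) := fun j => lin.comp (BSslot frmap l j)
  let rin : R →+* RC := ringTensor.inl RBm.right (BSgen (fixedSubring R) l).left
  let rinr : (BSgen (fixedSubring R) l).carrier →+* RC :=
    ringTensor.inr RBm.right (BSgen (fixedSubring R) l).left
  let rslot : ℕ → (R →+* RC) := fun j => rinr.comp (BSslot (fixedSubring R) l j)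
  -- basic gluing facts
  have F1 : ∀ x : ↥Ar, ρ0 (incl x) = lslot l.length x := by
    intro x
    have e := ringTensor.inl_eq_inr (BSgen frmap l).right RBm.left x
    have e2 : lin ((BSgen frmap l).right x) = lslot l.length x :=
      congrArg lin (BSgen_right_eq frmap l x)
    exact e.symm.trans e2
  have F2 : ∀ x : R, rin x = rslot 0 x := by
    intro x
    have e := ringTensor.inl_eq_inr RBm.right (BSgen (fixedSubring R) l).left x
    have e2 : rinr ((BSgen (fixedSubring R) l).left x) = rslot 0 x :=
      congrArg rinr (BSgen_left_eq (fixedSubring R) l x)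
    exact e.trans e2
  have lS1 : ∀ (j : ℕ) (h : j < l.length) (x : ↥Ar), x ∈ frmap (l.get ⟨j, h⟩) →
      lslot j x = lslot (j + 1) x :=
    fun j h x hx => congrArg lin (BSslot_adj frmap l j h x hx)
  have rS1 : ∀ (j : ℕ) (h : j < l.length) (x : R), x ∈ fixedSubring R (l.get ⟨j, h⟩) →
      rslot j x = rslot (j + 1) x :=
    fun j h x hx => congrArg rinr (BSslot_adj (fixedSubring R) l j h x hx)
  have lconst : ∀ (x : ↥Ar), (∀ t ∈ l, x ∈ frmap t) → ∀ j, lslot j x = lslot l.length x := by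
    intro x hx j
    rcases le_or_gt j l.length with hj | hj
    · exact congrArg lin (BSslot_eq_last frmap l x hx j hj)
    · exact congrArg lin (BSslot_overflow frmap l j (le_of_lt hj) x)
  have rconst : ∀ (x : R), (∀ t ∈ l, x ∈ fixedSubring R t) → ∀ j,
      rslot j x = rslot l.length x := by
    intro x hx j
    rcases le_or_gt j l.length with hj | hj
    · exact congrArg rinr (BSslot_eq_last (fixedSubring R) l x hx j hj)
    · exact congrArg rinr (BSslot_overflow (fixedSubring R) l j (le_of_lt hj) x)
  have hkfixR : ∀ (c : k) (t : W), algebraMap k R c ∈ fixedSubring R t := by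
    intro c t
    show t • (algebraMap k R c) = algebraMap k R c
    rw [Algebra.algebraMap_eq_smul_one, smul_comm, smul_one]
  have hinclalg : ∀ c : k, incl (algebraMap k ↥Ar c) = algebraMap k R c := fun c =>
    Ar.val.commutes c
  have hkfixAr : ∀ (c : k) (t : W), (algebraMap k ↥Ar c) ∈ frmap t := by
    intro c t
    refine Subring.mem_comap.mpr ?_
    rw [show Ar.val.toRingHom (algebraMap k ↥Ar c) = algebraMap k R c from hinclalg c]
    exact hkfixR c t
  -- algebra structures
  letI algLC : Algebra k LC := (ρ0.comp (algebraMap k R)).toAlgebra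
  letI algRC : Algebra k RC := ((rslot l.length).comp (algebraMap k R)).toAlgebra
  have halgLC : ∀ c : k, algebraMap k LC c = ρ0 (algebraMap k R c) := fun c => rfl
  have halgRC : ∀ c : k, algebraMap k RC c = rslot l.length (algebraMap k R c) := fun c => rfl
  let ρA : R →ₐ[k] LC := { toRingHom := ρ0, commutes' := fun c => rfl }
  have lslot_alg : ∀ (j : ℕ) (c : k), lslot j (algebraMap k ↥Ar c) = algebraMap k LC c := by
    intro j c
    rw [lconst _ (fun t _ => hkfixAr c t) j, halgLC, ← hinclalg c]
    exact (F1 _).symm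
  let lslotA : ℕ → (↥Ar →ₐ[k] LC) := fun j =>
    { toRingHom := lslot j, commutes' := lslot_alg j }
  have rslot_alg : ∀ (j : ℕ) (c : k), rslot j (algebraMap k R c) = algebraMap k RC c := by
    intro j c
    rw [rconst _ (fun t _ => hkfixR c t) j, halgRC]
  let rslotA : ℕ → (R →ₐ[k] RC) := fun j =>
    { toRingHom := rslot j, commutes' := rslot_alg j }
  -- the forward map
  let Gf := BSlift frmap l (fun j => (rslot j).comp incl)
    (fun j h x hx => rS1 j h (incl x) (Subring.mem_comap.mp hx))
  let F0 : LC →+* RC := ringTensor.lift (BSgen frmap l).right RBm.left Gf.1 (rslot l.length)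
    (fun a => (congrArg Gf.1 (BSgen_right_eq frmap l a)).trans (Gf.2 l.length (le_refl _) a))
  have hFρ : ∀ r' : R, F0 (ρ0 r') = rslot l.length r' := fun r' =>
    ringTensor.lift_inr (BSgen frmap l).right RBm.left _ _ _ r'
  have hFslot : ∀ (j : ℕ), j ≤ l.length → ∀ x, F0 (lslot j x) = rslot j (incl x) :=
    fun j hj x =>
      (ringTensor.lift_inl (BSgen frmap l).right RBm.left _ _ _ (BSslot frmap l j x)).trans
        (Gf.2 j hj x)
  let FA : LC →ₐ[k] RC := { toRingHom := F0, commutes' := fun c => hFρ (algebraMap k R c) }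
  -- key geometric data
  have KEY : ∀ j : ℕ, ∃ (α : V) (p : V →ₗ[k] V), (∀ v, p v ∈ Vr) ∧ ∀ (h : j < l.length),
      α ∈ Vr ∧ α ≠ 0 ∧ (l.get ⟨j, h⟩) • α = -α ∧ (∀ v, p v ∈ Submodule.span k {α}) ∧
      (∀ u ∈ fixedSubmodule k V (l.get ⟨j, h⟩), p u = 0) ∧ p α = α ∧
      (∀ v, v - p v ∈ fixedSubmodule k V (l.get ⟨j, h⟩)) := by
    intro j
    by_cases h : j < l.length
    · obtain ⟨α, p, h1, h2, h3, h4, h5, h6, h7⟩ :=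
        key_data cs hchar hfaithful Vr hVrfaithful (hl (l.get ⟨j, h⟩) (List.get_mem l ⟨j, h⟩))
      refine ⟨α, p, ?_, fun h' => ⟨h1, h2, h3, h4, h5, h6, h7⟩⟩
      intro v
      have hspan : Submodule.span k {α} ≤ Vr := by
        rw [Submodule.span_le, Set.singleton_subset_iff]
        exact h1
      exact hspan (h4 v)
    · exact ⟨0, 0, fun v => Submodule.zero_mem Vr, fun h' => absurd h' h⟩
  choose αf pf hpVr hKEY using KEY
  -- the sigma maps
  let qmap : ℕ → (V →ₗ[k] ↥Ar) := fun j =>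
    { toFun := fun v => ⟨ι (pf j v), Algebra.subset_adjoin ⟨pf j v, hpVr j v, rfl⟩⟩
      map_add' := fun a b => Subtype.ext (by
        show ι (pf j (a + b)) = ι (pf j a) + ι (pf j b)
        rw [map_add, map_add])
      map_smul' := fun c a => Subtype.ext (by
        show ι (pf j (c • a)) = c • (ι (pf j a))
        rw [map_smul, map_smul]) }
  let c₁ : ℕ → (V →ₗ[k] LC) := fun j => (lslotA j).toLinearMap.comp (qmap j)
  let c₂ : ℕ → (V →ₗ[k] R) := fun j => ι.comp (LinearMap.id - pf j)
  let extF : (V →ₗ[k] LC) → (R →ₐ[k] LC) := fun f0 =>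
    (hsym LC inferInstance inferInstance f0).choose
  have hext : ∀ f0 (v : V), extF f0 (ι v) = f0 v := fun f0 =>
    (hsym LC inferInstance inferInstance f0).choose_spec.1
  let S : ℕ → ℕ → (R →ₐ[k] LC) := sigmaL extF c₁ c₂ ρA
  have hSsucc : ∀ i j, S (i + 1) j = extF (c₁ j + (S i (j + 1)).toLinearMap.comp (c₂ j)) :=
    fun i j => rfl
  have hSgen : ∀ (i j : ℕ) (v : V),
      S (i + 1) j (ι v) = lslot j (qmap j v) + S i (j + 1) (ι (v - pf j v)) := by
    intro i j v
    rw [hSsucc i j, hext]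
    rfl
  -- P1 : sigma extends the left slots
  have P1 : ∀ (i j : ℕ), i + j = l.length → ∀ x : ↥Ar, S i j (incl x) = lslot j x := by
    intro i
    induction i with
    | zero =>
      intro j hj x
      obtain rfl : j = l.length := by omega
      exact F1 x
    | succ i ih =>
      intro j hj x
      have hjm : j < l.length := by omega
      have hhom : (S (i + 1) j).comp Ar.val = lslotA j := by
        apply algHom_ext_adjoin
        rintro y ⟨v, hvVr, rfl⟩
        show S (i + 1) j (ι v) = lslot j ⟨ι v, _⟩
        rw [hSgen i j v]
        have hsub : v - pf j v ∈ Vr := sub_mem hvVr (hpVr j v)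
        have hy2 : (ι (v - pf j v)) ∈ Ar := Algebra.subset_adjoin ⟨v - pf j v, hsub, rfl⟩
        have e1 : S i (j + 1) (ι (v - pf j v)) = lslot (j + 1) ⟨ι (v - pf j v), hy2⟩ :=
          ih (j + 1) (by omega) ⟨_, hy2⟩
        rw [e1]
        have hmemfr : (⟨ι (v - pf j v), hy2⟩ : ↥Ar) ∈ frmap (l.get ⟨j, hjm⟩) := by
          refine Subring.mem_comap.mpr ?_
          show (l.get ⟨j, hjm⟩) • ι (v - pf j v) = ι (v - pf j v)
          rw [hcompat]
          congr 1
          exact (hKEY j hjm).2.2.2.2.2.2 v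
        rw [← lS1 j hjm _ hmemfr, ← map_add]
        congr 1
        refine Subtype.ext ?_
        show ι (pf j v) + ι (v - pf j v) = ι v
        rw [← map_add]
        congr 1
        abel
      exact congrArg (fun (φ : ↥Ar →ₐ[k] LC) => φ x) hhom
  -- P2 : adjacent sigmas agree on reflection invariants
  have P2 : ∀ (i j : ℕ) (hjm : j < l.length), i + 1 + j = l.length →
      ∀ x ∈ fixedSubring R (l.get ⟨j, hjm⟩), S (i + 1) j x = S i (j + 1) x := by
    intro i j hjm harith x hx
    obtain ⟨hα1, hα2, hα3, hα4, hα5, hα6, hα7⟩ := hKEY j hjm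
    have hq : Module.finrank k (V ⧸ fixedSubmodule k V (l.get ⟨j, hjm⟩)) = 1 :=
      (hfaithful.2 (l.get ⟨j, hjm⟩)).mpr (hl (l.get ⟨j, hjm⟩) (List.get_mem l ⟨j, hjm⟩)).1
    have hαn : αf j ∉ fixedSubmodule k V (l.get ⟨j, hjm⟩) := by
      intro hmem
      have hfix : (l.get ⟨j, hjm⟩) • αf j = αf j := hmem
      exact hα2 (eq_neg_self_imp_zero hchar (hfix.symm.trans hα3))
    have hadj := fixed_mem_adjoin hchar ι hsym hcompat hq hα2 hα3 hαn
      (show (l.get ⟨j, hjm⟩) • x = x from hx)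
    have hle : Algebra.adjoin k
        ((ι '' (fixedSubmodule k V (l.get ⟨j, hjm⟩) : Set V)) ∪ {ι (αf j) ^ 2}) ≤
        AlgHom.equalizer (S (i + 1) j) (S i (j + 1)) := by
      apply Algebra.adjoin_le
      rintro y (⟨v, hv, rfl⟩ | hy)
      · show S (i + 1) j (ι v) = S i (j + 1) (ι v)
        rw [hSgen i j v]
        have hpv : pf j v = 0 := hα5 v hv
        have hq0 : qmap j v = 0 := Subtype.ext (by
          show ι (pf j v) = 0
          rw [hpv, map_zero])
        rw [hq0, map_zero, hpv, sub_zero, zero_add]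
      · rw [Set.mem_singleton_iff] at hy
        subst hy
        show S (i + 1) j (ι (αf j) ^ 2) = S i (j + 1) (ι (αf j) ^ 2)
        have hmem1 : ι (αf j) ∈ Ar := Algebra.subset_adjoin ⟨αf j, hα1, rfl⟩
        have hmem2 : (ι (αf j)) ^ 2 ∈ Ar := pow_mem hmem1 2
        have hR : S i (j + 1) (ι (αf j) ^ 2) = lslot (j + 1) ⟨(ι (αf j)) ^ 2, hmem2⟩ :=
          P1 i (j + 1) (by omega) ⟨_, hmem2⟩
        rw [hR]
        have hmemfr : (⟨(ι (αf j)) ^ 2, hmem2⟩ : ↥Ar) ∈ frmap (l.get ⟨j, hjm⟩) := by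
          refine Subring.mem_comap.mpr ?_
          show (l.get ⟨j, hjm⟩) • (ι (αf j)) ^ 2 = (ι (αf j)) ^ 2
          rw [pow_two, smul_mul', hcompat, hα3, map_neg, neg_mul_neg]
        rw [← lS1 j hjm _ hmemfr]
        rw [map_pow, hSgen i j (αf j), hα6, sub_self, map_zero, map_zero, add_zero]
        rw [← map_pow]
        congr 1
        refine Subtype.ext ?_
        show (ι (pf j (αf j))) ^ 2 = (ι (αf j)) ^ 2
        rw [hα6]
    exact (AlgHom.mem_equalizer _ _ x).mp (hle hadj)
  -- C1 : compatibility of F with the sigmas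
  have C1 : ∀ (i j : ℕ), i + j = l.length → ∀ r' : R, F0 (S i j r') = rslot j r' := by
    intro i
    induction i with
    | zero =>
      intro j hj r'
      obtain rfl : j = l.length := by omega
      exact hFρ r'
    | succ i ih =>
      intro j hj r'
      have hjm : j < l.length := by omega
      have hhom : FA.comp (S (i + 1) j) = rslotA j := by
        apply algHom_ext_of_sym ι hsym
        intro v
        show F0 (S (i + 1) j (ι v)) = rslot j (ι v)
        rw [hSgen i j v, map_add]
        have e1 : F0 (S i (j + 1) (ι (v - pf j v))) = rslot (j + 1) (ι (v - pf j v)) :=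
          ih (j + 1) (by omega) _
        have e2 : F0 (lslot j (qmap j v)) = rslot j (incl (qmap j v)) :=
          hFslot j (le_of_lt hjm) _
        rw [e1, e2]
        have hmemf : ι (v - pf j v) ∈ fixedSubring R (l.get ⟨j, hjm⟩) := by
          show (l.get ⟨j, hjm⟩) • ι (v - pf j v) = ι (v - pf j v)
          rw [hcompat]
          congr 1
          exact (hKEY j hjm).2.2.2.2.2.2 v
        rw [← rS1 j hjm _ hmemf, ← map_add]
        congr 1
        show ι (pf j v) + ι (v - pf j v) = ι v
        rw [← map_add]
        congr 1
        abel
      exact congrArg (fun (φ : R →ₐ[k] RC) => φ r') hhom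
  -- the backward map
  have harithm : ∀ j, j < l.length → l.length - j = (l.length - (j + 1)) + 1 := by omega
  let gσ : ℕ → (R →+* LC) := fun j => (S (l.length - j) j).toRingHom
  let Gb := BSlift (fixedSubring R) l gσ (fun j h x hx => by
    show S (l.length - j) j x = S (l.length - (j + 1)) (j + 1) x
    rw [harithm j h]
    exact P2 (l.length - (j + 1)) j h (by omega) x hx)
  let G0 : RC →+* LC := ringTensor.lift RBm.right (BSgen (fixedSubring R) l).left
    (S l.length 0).toRingHom Gb.1
    (fun a => (Gb.2 0 (Nat.zero_le _) a).symm.trans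
      (congrArg Gb.1 (BSgen_left_eq (fixedSubring R) l a)).symm)
  have hGslot : ∀ (j : ℕ), j ≤ l.length → ∀ x, G0 (rslot j x) = S (l.length - j) j x :=
    fun j hj x =>
      (ringTensor.lift_inr RBm.right (BSgen (fixedSubring R) l).left _ _ _
        (BSslot (fixedSubring R) l j x)).trans (Gb.2 j hj x)
  have hGrin : ∀ x, G0 (rin x) = S l.length 0 x := fun x =>
    ringTensor.lift_inl RBm.right (BSgen (fixedSubring R) l).left _ _ _ x
  -- mutual inverses
  have hFG : ∀ y, F0 (G0 y) = y := by
    have hhom : (F0.comp G0) = RingHom.id RC := by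
      apply ringTensor.hom_ext RBm.right (BSgen (fixedSubring R) l).left
      · intro c
        show F0 (G0 (rin c)) = rin c
        rw [hGrin c, C1 l.length 0 (by omega) c]
        exact (F2 c).symm
      · intro d
        show F0 (G0 (rinr d)) = rinr d
        have hhom2 : (F0.comp G0).comp rinr = rinr := by
          apply BSgen_hom_ext (fixedSubring R) l
          intro j hj x
          show F0 (G0 (rslot j x)) = rslot j x
          rw [hGslot j hj x, C1 (l.length - j) j (by omega) x]
        exact RingHom.congr_fun hhom2 d
    intro y
    exact RingHom.congr_fun hhom y
  have hGF : ∀ x, G0 (F0 x) = x := by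
    have hhom : (G0.comp F0) = RingHom.id LC := by
      apply ringTensor.hom_ext (BSgen frmap l).right RBm.left
      · intro c
        show G0 (F0 (lin c)) = lin c
        have hhom2 : (G0.comp F0).comp lin = lin := by
          apply BSgen_hom_ext frmap l
          intro j hj x
          show G0 (F0 (lslot j x)) = lslot j x
          rw [hFslot j hj x, hGslot j hj (incl x)]
          exact P1 (l.length - j) j (by omega) x
        exact RingHom.congr_fun hhom2 c
      · intro r'
        show G0 (F0 (ρ0 r')) = ρ0 r'
        rw [hFρ r', hGslot l.length (le_refl _) r']
        rw [show l.length - l.length = 0 from Nat.sub_self _]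
        rfl
    intro x
    exact RingHom.congr_fun hhom x
  -- bimodule compatibility
  have hFl : ∀ a : ↥Ar, F0 (((BSgen frmap l).tensor RBm).left a) =
      (RBm.tensor (BSgen (fixedSubring R) l)).left a := by
    intro a
    show F0 (lin ((BSgen frmap l).left a)) = rin (incl a)
    have e1 : F0 (lin ((BSgen frmap l).left a)) = F0 (lslot 0 a) :=
      congrArg F0 (congrArg lin (BSgen_left_eq frmap l a))
    rw [e1, hFslot 0 (Nat.zero_le _) a]
    exact (F2 (incl a)).symm
  have hFr : ∀ b : R, F0 (((BSgen frmap l).tensor RBm).right b) =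
      (RBm.tensor (BSgen (fixedSubring R) l)).right b := by
    intro b
    show F0 (ρ0 b) = rinr ((BSgen (fixedSubring R) l).right b)
    rw [hFρ b]
    exact (congrArg rinr (BSgen_right_eq (fixedSubring R) l b)).symm
  exact bimodIso_of_ringHom F0 G0 hFl hFr hGF hFG


end SB
end

section
/- Let p be a prime and m a natural number with base-p expansion m = Σ_{j=0}^{ℓ} m_j p^j where 0 ≤ m_j < p. Then in the Laurent polynomial ring ℤ[X, X⁻¹] one has ∏_{j=0}^{ℓ} ( Σ_{k=0}^{m_j} X^{p^j (m_j − 2k)} ) = Σ_{i=0}^{m} c_i X^{m − 2i}, where c_i = 1 if the binomial coefficient C(m, i) is not divisible by p, and c_i = 0 otherwise. -/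
open LaurentPolynomial Finset

/-!
Write `m = a + p * b` with `a < p`. By Lucas's theorem, for `k < p` the binomial coefficient
`C(m, k + p * j)` is prime to `p` exactly when `k ≤ a` and `C(b, j)` is prime to `p`, while
`C(a, k)` is prime to `p` for every `k ≤ a`. Hence the sum over `i` with `p ∤ C(m, i)` of
`X ^ (m - 2 i)` factors as `(∑_{k ≤ a} X ^ (a - 2 k))` times the same sum for `b` taken in
`X ^ p`, and the theorem follows by induction on the number of digits.
-/

theorem Finset.sum_range_mul_eq_sum_sum {M : Type*} [AddCommMonoid M] (f : ℕ → M) (p n : ℕ) :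
    ∑ i ∈ range (p * n), f i = ∑ j ∈ range n, ∑ k ∈ range p, f (k + p * j) := by
  induction n with
  | zero => simp
  | succ n ih =>
    rw [Nat.mul_succ, sum_range_add, ih, sum_range_succ]
    exact congrArg _ (sum_congr rfl fun k _ => by rw [add_comm])

theorem Nat.choose_add_mul_modEq {p : ℕ} [Fact p.Prime] {a k : ℕ} (ha : a < p) (hk : k < p)
    (b j : ℕ) : (a + p * b).choose (k + p * j) ≡ a.choose k * b.choose j [MOD p] := by
  have hmod (x y : ℕ) (hx : x < p) : (x + p * y) % p = x := by
    rw [Nat.add_mul_mod_self_left, Nat.mod_eq_of_lt hx]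
  have hdiv (x y : ℕ) (hx : x < p) : (x + p * y) / p = y := by
    rw [Nat.add_mul_div_left _ _ (Fact.out : p.Prime).pos, Nat.div_eq_of_lt hx, zero_add]
  simpa only [hmod _ _ ha, hmod _ _ hk, hdiv _ _ ha, hdiv _ _ hk] using
    Choose.choose_modEq_choose_mod_mul_choose_div_nat (p := p) (n := a + p * b) (k := k + p * j)

theorem Nat.Prime.dvd_choose_add_mul_iff {p a k : ℕ} (hp : p.Prime) (hk : k ≤ a) (ha : a < p)
    (b j : ℕ) : p ∣ (a + p * b).choose (k + p * j) ↔ p ∣ b.choose j := by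
  have := Fact.mk hp
  rw [(Nat.choose_add_mul_modEq ha (hk.trans_lt ha) b j).dvd_iff dvd_rfl, hp.dvd_mul,
    or_iff_right (hp.coprime_iff_not_dvd.mp (hp.coprime_choose_of_lt ha hk))]

theorem Nat.Prime.dvd_choose_add_mul_of_lt {p a k : ℕ} (hp : p.Prime) (hak : a < k) (hk : k < p)
    (b j : ℕ) : p ∣ (a + p * b).choose (k + p * j) := by
  have := Fact.mk hp
  rw [(Nat.choose_add_mul_modEq (hak.trans hk) hk b j).dvd_iff dvd_rfl,
    Nat.choose_eq_zero_of_lt hak, zero_mul]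
  exact dvd_zero p

/-- The parameter `e` rescales all exponents, so `lucasCharacter p m (e * p)` is the Frobenius
twist of `lucasCharacter p m e`; for `e = 1` this is the character of `L_m`. -/
noncomputable def lucasCharacter (p m : ℕ) (e : ℤ) : LaurentPolynomial ℤ :=
  ∑ i ∈ range (m + 1), if p ∣ m.choose i then 0 else T (e * ((m : ℤ) - 2 * (i : ℤ)))

theorem lucasCharacter_of_lt {p m : ℕ} (hp : p.Prime) (hm : m < p) (e : ℤ) :
    lucasCharacter p m e = ∑ k ∈ range (m + 1), T (e * ((m : ℤ) - 2 * (k : ℤ))) := by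
  refine sum_congr rfl fun k hk => if_neg ?_
  exact hp.coprime_iff_not_dvd.mp
    (hp.coprime_choose_of_lt hm (Nat.lt_succ_iff.mp (mem_range.mp hk)))

theorem lucasCharacter_add_mul {p a : ℕ} (hp : p.Prime) (ha : a < p) (b : ℕ) (e : ℤ) :
    lucasCharacter p (a + p * b) e = lucasCharacter p a e * lucasCharacter p b (e * p) := by
  set g : ℕ → LaurentPolynomial ℤ := fun i =>
    if p ∣ (a + p * b).choose i then 0 else T (e * (((a + p * b : ℕ) : ℤ) - 2 * (i : ℤ)))
  have hextend : lucasCharacter p (a + p * b) e = ∑ i ∈ range (p * (b + 1)), g i := by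
    refine sum_subset (range_subset_range.mpr (by linarith)) fun i _ hi => if_pos ?_
    rw [Nat.choose_eq_zero_of_lt (by simpa using hi)]
    exact dvd_zero p
  have hdigit (j : ℕ) :
      ∑ k ∈ range p, g (k + p * j) = ∑ k ∈ range (a + 1), g (k + p * j) := by
    refine (sum_subset (range_subset_range.mpr ha) fun k hkp hka => if_pos ?_).symm
    exact hp.dvd_choose_add_mul_of_lt (by simpa using hka) (mem_range.mp hkp) b j
  rw [hextend, sum_range_mul_eq_sum_sum, lucasCharacter_of_lt hp ha, lucasCharacter, mul_sum]
  refine sum_congr rfl fun j _ => ?_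
  rw [hdigit, sum_mul]
  refine sum_congr rfl fun k hk => ?_
  rw [mul_ite, mul_zero, ← T_add]
  refine if_congr (hp.dvd_choose_add_mul_iff (Nat.lt_succ_iff.mp (mem_range.mp hk)) ha b j)
    rfl (congrArg T ?_)
  push_cast
  ring

theorem prod_lucasCharacter_digits {p : ℕ} (hp : p.Prime) (ℓ : ℕ) (d : ℕ → ℕ)
    (hd : ∀ j ≤ ℓ, d j < p) (e : ℤ) :
    ∏ j ∈ range (ℓ + 1), lucasCharacter p (d j) (e * p ^ j)
      = lucasCharacter p (∑ j ∈ range (ℓ + 1), d j * p ^ j) e := by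
  induction ℓ generalizing d e with
  | zero => simp
  | succ ℓ ih =>
    have hdigits : ∑ j ∈ range (ℓ + 2), d j * p ^ j
        = d 0 + p * ∑ j ∈ range (ℓ + 1), d (j + 1) * p ^ j := by
      rw [sum_range_succ', pow_zero, mul_one, add_comm, mul_sum]
      congr 1
      exact sum_congr rfl fun j _ => by ring
    rw [prod_range_succ', hdigits, lucasCharacter_add_mul hp (hd 0 (Nat.zero_le _)),
      ← ih (fun j => d (j + 1)) (fun j hj => hd (j + 1) (by omega)) (e * p),
      pow_zero, mul_one, mul_comm]
    exact congrArg _ (prod_congr rfl fun j _ => by rw [pow_succ', mul_assoc])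

/-- Let `p` be a prime and `m` a natural number with base-`p` expansion
`m = Σ_{j=0}^{ℓ} m_j p^j`, `0 ≤ m_j < p`.  Then in `ℤ[X, X⁻¹]` one has
`∏_{j=0}^{ℓ} (Σ_{k=0}^{m_j} X^{p^j (m_j − 2k)}) = Σ_{i=0}^{m} c_i X^{m − 2i}`
where `c_i = 1` if `p ∤ C(m,i)` and `c_i = 0` otherwise.
(Here `T e` denotes `X^e` in the Laurent polynomial ring `ℤ[T;T⁻¹]`.) -/
theorem steinberg_character_binomial_vanishing
    (p : ℕ) (hp : p.Prime) (m : ℕ)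
    (ℓ : ℕ) (d : ℕ → ℕ)
    (hdig : ∀ j ≤ ℓ, d j < p)
    (hexp : m = ∑ j ∈ Finset.range (ℓ + 1), d j * p ^ j) :
    (∏ j ∈ Finset.range (ℓ + 1),
        ∑ k ∈ Finset.range (d j + 1),
          (T ((p : ℤ) ^ j * ((d j : ℤ) - 2 * (k : ℤ))) : LaurentPolynomial ℤ))
      = ∑ i ∈ Finset.range (m + 1),
          if p ∣ m.choose i then 0
          else T ((m : ℤ) - 2 * (i : ℤ)) := by
  have hfactor : ∀ j ∈ range (ℓ + 1), ∑ k ∈ range (d j + 1),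
      (T ((p : ℤ) ^ j * ((d j : ℤ) - 2 * (k : ℤ))) : LaurentPolynomial ℤ)
        = lucasCharacter p (d j) (1 * p ^ j) := fun j hj => by
    rw [one_mul, lucasCharacter_of_lt hp (hdig j (Nat.lt_succ_iff.mp (mem_range.mp hj)))]
  rw [prod_congr rfl hfactor, prod_lucasCharacter_digits hp ℓ d hdig, ← hexp]
  simp only [lucasCharacter, one_mul]
end
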